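/- arXiv:2508.14269 — 7 statements merged into one kernel-verified Lean document; each statement's English description precedes it below -/
import Mathlib

section
/- If 0 ≤ q ≤ p ≤ 1 and J is a q-sparse graph, then there is a chain ∅ = W_0 ⊊ W_1 ⊊ ··· ⊊ W_k = V(J) such that for each i ∈ [k], the rooted graph J[W_{i-1}, W_i] is p-leading and μ_p(W_{i-1}, W_i) ≥ 1. -/
open SimpleGraph

/-- Expected number of copies of `F` in `G(n,p)`: `(n)_{v_F} p^{e_F} / aut(F)`. -/
noncomputable def expCount (n : ℕ) (p : ℝ) {β : Type} [Fintype β] (F : SimpleGraph β) : ℝ :=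
  (n.descFactorial (Fintype.card β)) * p ^ (Nat.card F.edgeSet) / (Nat.card (F ≃g F))

/-- `J` is `q`-sparse (w.r.t. ground-set size `n`): every subgraph `I ⊆ J` has
`(n)_{v_I} q^{e_I} / aut(I) ≥ 1`. -/
def ExpSparse (n : ℕ) (q : ℝ) {β : Type} (J : SimpleGraph β) : Prop :=
  ∀ I : J.Subgraph, 1 ≤ (n.descFactorial (Nat.card I.verts)) * q ^ (Nat.card I.edgeSet) /
      (Nat.card (I.coe ≃g I.coe))

/-- `N(H,F)`: the number of subgraphs of `H` isomorphic to `F`. -/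
noncomputable def copyCount {α β : Type} (H : SimpleGraph α) (F : SimpleGraph β) : ℕ :=
  Nat.card {H' : H.Subgraph // Nonempty (F ≃g H'.coe)}

/-- Edge set of the rooted graph `J[W,Z]`: edges of `J` inside `Z` not inside `W`. -/
def rootedEdges {V : Type} (J : SimpleGraph V) (W Z : Finset V) : Set (Sym2 V) :=
  {e | e ∈ J.edgeSet ∧ (∀ x ∈ e, x ∈ Z) ∧ ¬ ∀ x ∈ e, x ∈ W}

/-- `e(W,Z)`: the number of edges of `J[W,Z]`. -/
noncomputable def eWZ {V : Type} (J : SimpleGraph V) (W Z : Finset V) : ℕ :=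
  Nat.card (rootedEdges J W Z)

/-- `aut(W,Z)`: the number of automorphisms of `J[W,Z]` fixing `W` pointwise
(realized as permutations of the ground set fixing everything outside `Z`). -/
noncomputable def autWZ {V : Type} (J : SimpleGraph V) (W Z : Finset V) : ℕ :=
  Nat.card {σ : Equiv.Perm V // (∀ v ∈ W, σ v = v) ∧ (∀ v, v ∉ Z → σ v = v) ∧
     ∀ e, e ∈ rootedEdges J W Z ↔ Sym2.map σ e ∈ rootedEdges J W Z}

/-- `μ_p(W,Z) = n^{v(W,Z)} p^{e(W,Z)} / aut(W,Z)`. -/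
noncomputable def mu {V : Type} [DecidableEq V] (n : ℕ) (p : ℝ) (J : SimpleGraph V)
    (W Z : Finset V) : ℝ :=
  (n : ℝ) ^ ((Z \ W).card) * p ^ (eWZ J W Z) / (autWZ J W Z)

/-- `J[W,Z]` is `p`-leading: `μ_p(Y,Z) < 1` for all `W ⊊ Y ⊊ Z`. -/
def Leading {V : Type} [DecidableEq V] (n : ℕ) (p : ℝ) (J : SimpleGraph V)
    (W Z : Finset V) : Prop :=
  ∀ Y : Finset V, W ⊂ Y → Y ⊂ Z → mu n p J Y Z < 1


section Aux

variable {n : ℕ}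

/-- The induced subgraph of `J` on a finset `Z`. -/
def indSub (J : SimpleGraph (Fin n)) (Z : Finset (Fin n)) : J.Subgraph where
  verts := ↑Z
  Adj a b := a ∈ Z ∧ b ∈ Z ∧ J.Adj a b
  adj_sub h := h.2.2
  edge_vert h := h.1
  symm := ⟨fun _ _ h => ⟨h.2.1, h.1, h.2.2.symm⟩⟩

lemma mem_rooted_empty {J : SimpleGraph (Fin n)} {Z : Finset (Fin n)} {a b : Fin n} :
    s(a, b) ∈ rootedEdges J ∅ Z ↔ J.Adj a b ∧ a ∈ Z ∧ b ∈ Z := by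
  simp only [rootedEdges, Set.mem_setOf_eq, SimpleGraph.mem_edgeSet, Sym2.forall_mem_pair,
    Finset.notMem_empty]
  tauto

lemma indSub_edgeSet (J : SimpleGraph (Fin n)) (Z : Finset (Fin n)) :
    (indSub J Z).edgeSet = rootedEdges J ∅ Z := by
  ext e
  induction e using Sym2.ind with
  | _ a b =>
    rw [SimpleGraph.Subgraph.mem_edgeSet, mem_rooted_empty]
    show (a ∈ Z ∧ b ∈ Z ∧ J.Adj a b) ↔ _
    tauto

variable {J : SimpleGraph (Fin n)} {Z : Finset (Fin n)}

lemma perm_mem_iff {σ : Equiv.Perm (Fin n)} (h2 : ∀ v, v ∉ Z → σ v = v) :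
    ∀ v : Fin n, σ v ∈ Z ↔ v ∈ Z := by
  intro v
  constructor
  · intro hσ
    by_contra hv
    rw [h2 v hv] at hσ; exact hv hσ
  · intro hv
    by_contra hσ
    have := h2 _ hσ
    have := σ.injective this
    rw [← this] at hv; exact hσ hv

/-- A rooted automorphism of `J[∅,Z]` gives an automorphism of the induced subgraph. -/
noncomputable def toAut (σ : {σ : Equiv.Perm (Fin n) //
    (∀ v ∈ (∅ : Finset (Fin n)), σ v = v) ∧ (∀ v, v ∉ Z → σ v = v) ∧
    ∀ e, e ∈ rootedEdges J ∅ Z ↔ Sym2.map σ e ∈ rootedEdges J ∅ Z}) :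
    (indSub J Z).coe ≃g (indSub J Z).coe where
  toEquiv := Equiv.Perm.subtypePerm σ.1 (fun v => (perm_mem_iff σ.2.2.1 v))
  map_rel_iff' := by
    rintro ⟨a, ha⟩ ⟨b, hb⟩
    obtain ⟨σ, -, h2, h3⟩ := σ
    have ha' : a ∈ Z := ha
    have hb' : b ∈ Z := hb
    show (indSub J Z).Adj (σ a) (σ b) ↔ (indSub J Z).Adj a b
    have key := h3 s(a, b)
    rw [Sym2.map_pair_eq, mem_rooted_empty, mem_rooted_empty] at key
    have hma := (perm_mem_iff h2 a).mpr ha'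
    have hmb := (perm_mem_iff h2 b).mpr hb'
    constructor
    · rintro ⟨-, -, hadj⟩
      exact ⟨ha', hb', (key.mpr ⟨hadj, hma, hmb⟩).1⟩
    · rintro ⟨-, -, hadj⟩
      exact ⟨hma, hmb, (key.mp ⟨hadj, ha', hb'⟩).1⟩

instance : Finite ((indSub J Z).coe ≃g (indSub J Z).coe) :=
  Finite.of_injective (fun φ => (φ : ↥(indSub J Z).verts → ↥(indSub J Z).verts))
    DFunLike.coe_injective

lemma toAut_injective : Function.Injective (toAut (J := J) (Z := Z)) := by
  rintro ⟨σ, hσ⟩ ⟨τ, hτ⟩ h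
  have h2 := hσ.2.1
  have h2' := hτ.2.1
  have : ∀ x : Fin n, σ x = τ x := by
    intro x
    by_cases hx : x ∈ Z
    · have := DFunLike.congr_fun h (⟨x, hx⟩ : ↥(indSub J Z).verts)
      exact Subtype.ext_iff.mp this
    · rw [h2 x hx, h2' x hx]
  exact Subtype.ext (Equiv.ext this)

lemma autWZ_le_card_aut :
    autWZ J ∅ Z ≤ Nat.card ((indSub J Z).coe ≃g (indSub J Z).coe) :=
  Nat.card_le_card_of_injective _ toAut_injective

lemma one_le_autWZ (J : SimpleGraph (Fin n)) (W Z : Finset (Fin n)) :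
    1 ≤ autWZ J W Z := by
  have : Nonempty {σ : Equiv.Perm (Fin n) // (∀ v ∈ W, σ v = v) ∧ (∀ v, v ∉ Z → σ v = v) ∧
      ∀ e, e ∈ rootedEdges J W Z ↔ Sym2.map σ e ∈ rootedEdges J W Z} := by
    refine ⟨1, fun v _ => rfl, fun v _ => rfl, fun e => ?_⟩
    have he : Sym2.map (⇑(1 : Equiv.Perm (Fin n))) e = e := by
      rw [Equiv.Perm.coe_one, Sym2.map_id, id_eq]
    rw [he]
  exact Nat.one_le_iff_ne_zero.mpr (Nat.card_ne_zero.mpr ⟨this, inferInstance⟩)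

lemma card_verts : Nat.card (indSub J Z).verts = Z.card := by
  simp [indSub, Nat.card_coe_set_eq, Set.ncard_coe_finset]

lemma mu_empty_ge_one {q p : ℝ} (hq : 0 ≤ q) (hqp : q ≤ p)
    (J : SimpleGraph (Fin n)) (hJ : ExpSparse n q J) (Z : Finset (Fin n)) :
    1 ≤ mu n p J ∅ Z := by
  have h1 := hJ (indSub J Z)
  have hA := autWZ_le_card_aut (J := J) (Z := Z)
  have hB := one_le_autWZ J ∅ Z
  have he : Nat.card (indSub J Z).edgeSet = eWZ J ∅ Z := by
    rw [eWZ, indSub_edgeSet]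
  rw [card_verts, he] at h1
  have hp0 : 0 ≤ p := hq.trans hqp
  have hB0 : (0:ℝ) < (autWZ J ∅ Z : ℝ) := by exact_mod_cast hB
  rw [mu, Finset.sdiff_empty]
  refine le_trans h1 ?_
  have hD : ((n.descFactorial Z.card : ℕ) : ℝ) ≤ (n : ℝ) ^ Z.card := by
    have := Nat.descFactorial_le_pow n Z.card
    exact_mod_cast this
  gcongr
  all_goals first
    | exact hB0
    | exact_mod_cast hA
    | exact pow_le_pow_left hq hqp _
    | exact hD
    | positivity

end Aux

lemma chain_exists {n : ℕ} (p : ℝ) (J : SimpleGraph (Fin n))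
    (key : ∀ Z : Finset (Fin n), 1 ≤ mu n p J ∅ Z) (Z : Finset (Fin n)) :
    ∃ (k : ℕ) (W : ℕ → Finset (Fin n)), W 0 = ∅ ∧ W k = Z ∧
      ∀ i, i < k → W i ⊂ W (i + 1) ∧ Leading n p J (W i) (W (i + 1)) ∧
        1 ≤ mu n p J (W i) (W (i + 1)) := by
  induction Z using Finset.strongInduction with
  | _ Z ih =>
    by_cases hZ : Z = ∅
    · exact ⟨0, fun _ => ∅, rfl, by rw [hZ], fun i hi => absurd hi (Nat.not_lt_zero i)⟩
    · classical
      set F := Z.powerset.filter (fun Y => Y ≠ ∅ ∧ Y ≠ Z ∧ 1 ≤ mu n p J Y Z) with hF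
      by_cases hFne : F.Nonempty
      · obtain ⟨W₀, hW₀F, hmax⟩ := F.exists_max_image Finset.card hFne
        rw [hF, Finset.mem_filter, Finset.mem_powerset] at hW₀F
        obtain ⟨hsub, hne, hneZ, hmu⟩ := hW₀F
        have hss : W₀ ⊂ Z := ssubset_of_subset_of_ne hsub hneZ
        obtain ⟨k, W, hW0, hWk, hstep⟩ := ih W₀ hss
        refine ⟨k + 1, fun i => if i ≤ k then W i else Z, by simpa using hW0, by simp, ?_⟩
        intro i hi
        rcases Nat.lt_or_ge i k with hik | hik
        · have e1 : (if i ≤ k then W i else Z) = W i := if_pos hik.le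
          have e2 : (if i + 1 ≤ k then W (i + 1) else Z) = W (i + 1) := if_pos hik
          simp only [e1, e2]
          exact hstep i hik
        · have hik' : i = k := le_antisymm (Nat.lt_succ_iff.mp hi) hik
          subst hik'
          have e1 : (if i ≤ i then W i else Z) = W₀ := by rw [if_pos le_rfl, hWk]
          have e2 : (if i + 1 ≤ i then W (i + 1) else Z) = Z := if_neg (by omega)
          simp only [e1, e2]
          refine ⟨hss, ?_, hmu⟩
          intro Y h1 h2
          by_contra hle
          have h1le : 1 ≤ mu n p J Y Z := le_of_not_gt hle
          have hYF : Y ∈ F := by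
            rw [hF, Finset.mem_filter, Finset.mem_powerset]
            exact ⟨h2.subset, fun h => Finset.not_ssubset_empty W₀ (h ▸ h1),
              h2.ne, h1le⟩
          have := hmax Y hYF
          exact absurd this (not_le.mpr (Finset.card_lt_card h1))
      · refine ⟨1, fun i => if i = 0 then ∅ else Z, by simp, by simp, ?_⟩
        intro i hi
        have hi0 : i = 0 := by omega
        subst hi0
        simp only [if_pos rfl, if_neg one_ne_zero]
        refine ⟨Finset.empty_ssubset.mpr (Finset.nonempty_of_ne_empty hZ), ?_, key Z⟩
        intro Y h1 h2
        by_contra hle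
        have h1le : 1 ≤ mu n p J Y Z := le_of_not_gt hle
        refine hFne ⟨Y, ?_⟩
        rw [hF, Finset.mem_filter, Finset.mem_powerset]
        exact ⟨h2.subset, Finset.nonempty_iff_ne_empty.mp (Finset.empty_ssubset.mp h1),
          h2.ne, h1le⟩

/-- Proposition 2.2: if `0 ≤ q ≤ p ≤ 1` and `J` is `q`-sparse, there is a chain
`∅ = W₀ ⊊ W₁ ⊊ ⋯ ⊊ W_k = V(J)` with each `J[W_{i-1},W_i]` `p`-leading and
`μ_p(W_{i-1},W_i) ≥ 1`. -/
theorem leading_decomposition {n : ℕ} {q p : ℝ} (hq : 0 ≤ q) (hqp : q ≤ p) (hp : p ≤ 1)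
    (J : SimpleGraph (Fin n)) (hJ : ExpSparse n q J) :
    ∃ (k : ℕ) (W : ℕ → Finset (Fin n)), W 0 = ∅ ∧ W k = Finset.univ ∧
      ∀ i, i < k → W i ⊂ W (i + 1) ∧ Leading n p J (W i) (W (i + 1)) ∧
        1 ≤ mu n p J (W i) (W (i + 1)) := by
  exact chain_exists p J (mu_empty_ge_one hq hqp J hJ) Finset.univ
end

section
/- If J[W,Z] is p-leading with A = Z \ W, then μ_p(W,Z) ≤ n, and the inequality is strict if |A| ≥ 2. -/
open SimpleGraph

lemma rootedEdges_anti {V : Type} (J : SimpleGraph V) {W Y : Finset V} (Z : Finset V)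
    (h : W ⊆ Y) : rootedEdges J Y Z ⊆ rootedEdges J W Z := by
  rintro e ⟨he, hz, hy⟩
  exact ⟨he, hz, fun hw => hy fun x hx => h (hw x hx)⟩

lemma eWZ_anti {n : ℕ} (J : SimpleGraph (Fin n)) {W Y : Finset (Fin n)} (Z : Finset (Fin n))
    (h : W ⊆ Y) : eWZ J Y Z ≤ eWZ J W Z := by
  simp only [eWZ, Nat.card_coe_set_eq]
  exact Set.ncard_le_ncard (rootedEdges_anti J Z h) (Set.toFinite _)

lemma autWZ_pos {n : ℕ} (J : SimpleGraph (Fin n)) (W Z : Finset (Fin n)) :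
    0 < autWZ J W Z := by
  refine Nat.card_pos_iff.mpr ⟨⟨⟨1, fun v _ => rfl, fun v _ => rfl, fun e => by simp⟩⟩, ?_⟩
  infer_instance

lemma autWZ_anti {n : ℕ} (J : SimpleGraph (Fin n)) {W Y Z : Finset (Fin n)}
    (hWY : W ⊆ Y) (hYZ : Y ⊆ Z) : autWZ J Y Z ≤ autWZ J W Z := by
  have key : ∀ (σ : Equiv.Perm (Fin n)), (∀ v ∈ Y, σ v = v) →
      ∀ v : Fin n, σ v ∈ Y → σ v = v := by
    intro σ hfix v hv
    by_contra hne
    exact hne (σ.injective (by rw [hfix _ hv]))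
  apply Nat.card_le_card_of_injective
    (f := fun σ => (⟨σ.1, ?_, σ.2.2.1, ?_⟩ :
      {σ : Equiv.Perm (Fin n) // (∀ v ∈ W, σ v = v) ∧ (∀ v, v ∉ Z → σ v = v) ∧
        ∀ e, e ∈ rootedEdges J W Z ↔ Sym2.map σ e ∈ rootedEdges J W Z}))
  · intro σ τ h
    exact Subtype.ext (by simpa using congrArg Subtype.val h)
  · exact fun v hv => σ.2.1 v (hWY hv)
  · obtain ⟨σ, hfixY, hfixZ, hiff⟩ := σ
    intro e
    constructor
    · rintro he
      by_cases hY : ∀ x ∈ e, x ∈ Y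
      · have : Sym2.map σ e = e := by
          induction e using Sym2.inductionOn with
          | hf a b =>
            simp only [Sym2.map_pair_eq]
            rw [hfixY a (hY a (by simp)), hfixY b (hY b (by simp))]
        rw [this]; exact he
      · exact rootedEdges_anti J Z hWY
          ((hiff e).mp ⟨he.1, he.2.1, hY⟩)
    · intro he
      by_cases hY : ∀ x ∈ Sym2.map σ e, x ∈ Y
      · have : Sym2.map σ e = e := by
          induction e using Sym2.inductionOn with
          | hf a b =>
            simp only [Sym2.map_pair_eq]
            rw [key σ hfixY a (hY (σ a) (by simp [Sym2.map_pair_eq])),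
                key σ hfixY b (hY (σ b) (by simp [Sym2.map_pair_eq]))]
        rw [← this]; exact he
      · exact rootedEdges_anti J Z hWY ((hiff e).mpr ⟨he.1, he.2.1, hY⟩)

/-- Proposition 2.3(a): if `J[W,Z]` is `p`-leading with `A = Z \ W`, then
`μ_p(W,Z) ≤ n`, strictly if `|A| ≥ 2`. -/
theorem leading_mu_le_n {n : ℕ} {p : ℝ} (hp0 : 0 ≤ p) (hp1 : p ≤ 1)
    (J : SimpleGraph (Fin n)) (W Z : Finset (Fin n)) (hWZ : W ⊂ Z)
    (hlead : Leading n p J W Z) :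
    mu n p J W Z ≤ n ∧ (2 ≤ (Z \ W).card → mu n p J W Z < n) := by
  have hautW := autWZ_pos J W Z
  obtain ⟨v, hvZ, hvW⟩ := Finset.exists_of_ssubset hWZ
  have hn : 0 < n := Fin.pos v
  have hvZW : v ∈ Z \ W := Finset.mem_sdiff.mpr ⟨hvZ, hvW⟩
  have strict : 2 ≤ (Z \ W).card → mu n p J W Z < n := by
    intro h2
    set Y := insert v W with hYdef
    have hWY : W ⊂ Y := Finset.ssubset_insert hvW
    have hYsub : Y ⊆ Z := Finset.insert_subset hvZ hWZ.subset
    have hZY : Z \ Y = (Z \ W).erase v := by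
      ext x
      simp only [hYdef, Finset.mem_sdiff, Finset.mem_erase, Finset.mem_insert]
      tauto
    have hcard : (Z \ W).card = (Z \ Y).card + 1 := by
      rw [hZY, Finset.card_erase_of_mem hvZW]; omega
    have hYZ : Y ⊂ Z := by
      refine (Finset.ssubset_iff_of_subset hYsub).mpr ?_
      have hpos : 0 < (Z \ Y).card := by omega
      obtain ⟨x, hx⟩ := Finset.card_pos.mp hpos
      exact ⟨x, (Finset.mem_sdiff.mp hx).1, (Finset.mem_sdiff.mp hx).2⟩
    have hmuY := hlead Y hWY hYZ
    have hE : eWZ J Y Z ≤ eWZ J W Z := eWZ_anti J Z (Finset.subset_insert v W)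
    have hA : autWZ J Y Z ≤ autWZ J W Z := autWZ_anti J (Finset.subset_insert v W) hYsub
    have hautY := autWZ_pos J Y Z
    have h1 : (n : ℝ) ^ ((Z \ W).card) * p ^ (eWZ J W Z) ≤
        (n : ℝ) ^ ((Z \ W).card) * p ^ (eWZ J Y Z) :=
      mul_le_mul_of_nonneg_left (pow_le_pow_of_le_one hp0 hp1 hE) (by positivity)
    have step : mu n p J W Z ≤ (n : ℝ) * mu n p J Y Z := by
      calc mu n p J W Z ≤ (n : ℝ) ^ ((Z \ W).card) * p ^ (eWZ J Y Z) / (autWZ J Y Z) :=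
            div_le_div₀ (by positivity) h1 (by exact_mod_cast hautY) (by exact_mod_cast hA)
        _ = (n : ℝ) * mu n p J Y Z := by
            simp only [mu, hcard, pow_succ]
            ring
    calc mu n p J W Z ≤ (n : ℝ) * mu n p J Y Z := step
      _ < (n : ℝ) * 1 := by
          exact mul_lt_mul_of_pos_left hmuY (by exact_mod_cast hn)
      _ = n := mul_one _
  refine ⟨?_, strict⟩
  rcases Nat.lt_or_ge ((Z \ W).card) 2 with h | h
  · have hpos : 0 < (Z \ W).card := Finset.card_pos.mpr ⟨v, hvZW⟩
    have h1 : (Z \ W).card = 1 := by omega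
    simp only [mu, h1, pow_one]
    have haut1 : (1 : ℝ) ≤ (autWZ J W Z : ℝ) := by exact_mod_cast hautW
    calc (n : ℝ) * p ^ eWZ J W Z / (autWZ J W Z : ℝ)
        ≤ (n : ℝ) * p ^ eWZ J W Z := div_le_self (by positivity) haut1
      _ ≤ (n : ℝ) * 1 := by
          exact mul_le_mul_of_nonneg_left (pow_le_one₀ hp0 hp1) (by positivity)
      _ = n := mul_one _
  · exact le_of_lt (strict h)
end

section
/- If J[W,Z] is p-leading with p ≥ 1/n and A = Z \ W, then either |A| = 1 or every vertex of A has degree at least 2 in the rooted graph J[W,Z]. -/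
open SimpleGraph

/-- Proposition 2.3(b): if `J[W,Z]` is `p`-leading with `p ≥ 1/n` and `A = Z \ W`,
then `|A| = 1` or every vertex of `A` has degree at least 2 in `J[W,Z]`. -/
theorem leading_min_degree {n : ℕ} {p : ℝ} (hp1 : p ≤ 1) (hp : 1 / (n : ℝ) ≤ p)
    (J : SimpleGraph (Fin n)) (W Z : Finset (Fin n)) (hWZ : W ⊂ Z)
    (hlead : Leading n p J W Z) :
    (Z \ W).card = 1 ∨
      ∀ v ∈ Z \ W, 2 ≤ Nat.card {e : Sym2 (Fin n) | e ∈ rootedEdges J W Z ∧ v ∈ e} := by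
  by_cases hA : (Z \ W).card = 1
  · exact Or.inl hA
  right
  intro v hv
  have hvZ : v ∈ Z := (Finset.mem_sdiff.mp hv).1
  have hvW : v ∉ W := (Finset.mem_sdiff.mp hv).2
  have hn : 0 < n := v.pos
  have hAcard : 2 ≤ (Z \ W).card := by
    have h1 : 0 < (Z \ W).card := Finset.card_pos.mpr ⟨v, hv⟩
    omega
  obtain ⟨u, hu, huv⟩ : ∃ u ∈ Z \ W, u ≠ v :=
    Finset.exists_mem_ne (by omega) v
  set Y := Z.erase v with hY
  have hWY : W ⊂ Y := by
    constructor
    · intro x hx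
      exact Finset.mem_erase.mpr ⟨fun h => hvW (h ▸ hx), hWZ.1 hx⟩
    · intro h
      exact (Finset.mem_sdiff.mp hu).2
        (h (Finset.mem_erase.mpr ⟨huv, (Finset.mem_sdiff.mp hu).1⟩))
  have hYZ : Y ⊂ Z := Finset.erase_ssubset hvZ
  have hmu := hlead Y hWY hYZ
  have hset : rootedEdges J Y Z = {e : Sym2 (Fin n) | e ∈ rootedEdges J W Z ∧ v ∈ e} := by
    ext e
    simp only [rootedEdges, Set.mem_setOf_eq]
    constructor
    · rintro ⟨he, hZ, hY'⟩
      push_neg at hY'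
      obtain ⟨x, hxe, hxY⟩ := hY'
      have hxv : x = v := by
        by_contra hne
        exact hxY (Finset.mem_erase.mpr ⟨hne, hZ x hxe⟩)
      subst hxv
      exact ⟨⟨he, hZ, fun h => hvW (h x hxe)⟩, hxe⟩
    · rintro ⟨⟨he, hZ, _⟩, hve⟩
      refine ⟨he, hZ, fun h => ?_⟩
      exact (Finset.notMem_erase v Z) (h v hve)
  have haut : autWZ J Y Z = 1 := by
    rw [autWZ, Nat.card_eq_one_iff_unique]
    have hid : ∀ σ : Equiv.Perm (Fin n), (∀ w ∈ Y, σ w = w) → (∀ w, w ∉ Z → σ w = w) →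
        σ = 1 := by
      intro σ h1 h2
      refine Equiv.Perm.ext fun x => ?_
      rw [Equiv.Perm.one_apply]
      by_cases hx : x = v
      · subst hx
        by_contra hne
        have hσv : σ x ∈ Y ∨ σ x ∉ Z := by
          by_cases h : σ x ∈ Z
          · exact Or.inl (Finset.mem_erase.mpr ⟨hne, h⟩)
          · exact Or.inr h
        have hu2 : σ (σ x) = σ x := by
          rcases hσv with h | h
          · exact h1 _ h
          · exact h2 _ h
        exact hne (σ.injective hu2)
      · by_cases hxZ : x ∈ Z
        · exact h1 x (Finset.mem_erase.mpr ⟨hx, hxZ⟩)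
        · exact h2 x hxZ
    constructor
    · constructor
      rintro ⟨σ, hσ1, hσ2, _⟩ ⟨τ, hτ1, hτ2, _⟩
      have := (hid σ hσ1 hσ2).trans (hid τ hτ1 hτ2).symm
      exact Subtype.ext this
    · refine ⟨⟨1, fun w _ => rfl, fun w _ => rfl, fun e => ?_⟩⟩
      simp
  have hcardZY : (Z \ Y).card = 1 := by
    have hZY : Z \ Y = {v} := by
      ext x
      simp only [hY, Finset.mem_sdiff, Finset.mem_erase, Finset.mem_singleton, not_and]
      constructor
      · rintro ⟨hxZ, h⟩
        by_contra hne
        exact (h hne) hxZ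
      · rintro rfl
        exact ⟨hvZ, fun h _ => h rfl⟩
    rw [hZY, Finset.card_singleton]
  set d := Nat.card {e : Sym2 (Fin n) | e ∈ rootedEdges J W Z ∧ v ∈ e} with hd
  have heq : eWZ J Y Z = d := by rw [eWZ, hset]
  rw [mu, haut, heq, hcardZY] at hmu
  simp only [Nat.cast_one, div_one, pow_one] at hmu
  -- hmu : (n : ℝ) * p ^ d < 1
  by_contra hdlt
  push_neg at hdlt
  have hp0 : 0 ≤ p := le_trans (by positivity) hp
  have hpd : p ^ 1 ≤ p ^ d := pow_le_pow_of_le_one hp0 hp1 (by omega)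
  rw [pow_one] at hpd
  have hnpos : (0 : ℝ) < n := by exact_mod_cast hn
  have h1 : (1 : ℝ) ≤ (n : ℝ) * p := by
    rw [div_le_iff₀ hnpos] at hp
    linarith
  have h2 : (n : ℝ) * p ≤ (n : ℝ) * p ^ d :=
    mul_le_mul_of_nonneg_left hpd (le_of_lt hnpos)
  linarith
end

section
/- Suppose J[W,Z] is p-leading with p ≥ 1/n, |Z \ W| ≥ 2, and μ_p(W,Z) ≥ 1. Let A = Z \ W and B = N(A) ∩ W. Then e(B,A) ≥ max{|A|, |B|+1}, and moreover e(B,A) > |A| unless B = ∅ and J[A] is a cycle. -/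
open SimpleGraph

/-- `e(A,B)`: edges of `J` with at least one endpoint in `A`, both in `A ∪ B`. -/
noncomputable def eAB {V : Type} [DecidableEq V] (J : SimpleGraph V) (A B : Finset V) : ℕ :=
  Nat.card {e : Sym2 V | e ∈ J.edgeSet ∧ (∃ x ∈ e, x ∈ A) ∧ ∀ x ∈ e, x ∈ A ∪ B}


set_option linter.unusedSectionVars false
set_option linter.unusedVariables false
set_option maxHeartbeats 1000000
section AUX
open Finset

section Cycle
variable {V : Type} [Fintype V] [DecidableEq V] (G : SimpleGraph V) [DecidableRel G.Adj]

/-- the neighbor of `v` other than `w` (junk if not well-defined) -/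
noncomputable def otherNbr (v w : V) : V :=
  if h : ((G.neighborFinset v).erase w).Nonempty then h.choose else v

variable (hd : ∀ v : V, G.degree v = 2)

include hd in
lemma erase_nbr_card {v w : V} (h : G.Adj v w) :
    ((G.neighborFinset v).erase w).card = 1 := by
  rw [Finset.card_erase_of_mem (by simpa using h), card_neighborFinset_eq_degree, hd]

include hd in
lemma otherNbr_spec {v w : V} (h : G.Adj v w) :
    G.Adj v (otherNbr G v w) ∧ otherNbr G v w ≠ w := by
  have hc := erase_nbr_card G hd h
  have hne : ((G.neighborFinset v).erase w).Nonempty := by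
    rw [← Finset.card_pos, hc]; norm_num
  have hmem := hne.choose_spec
  rw [otherNbr, dif_pos hne]
  exact ⟨by simpa using (Finset.mem_erase.mp hmem).2,
    (Finset.mem_erase.mp hmem).1⟩

include hd in
lemma otherNbr_unique {v w u : V} (h : G.Adj v w) (h' : G.Adj v u) (hne : u ≠ w) :
    u = otherNbr G v w := by
  have hc := erase_nbr_card G hd h
  obtain ⟨a, ha⟩ := Finset.card_eq_one.mp hc
  have h1 : u ∈ (G.neighborFinset v).erase w := by
    rw [Finset.mem_erase]; exact ⟨hne, by simpa using h'⟩
  have h2 : otherNbr G v w ∈ (G.neighborFinset v).erase w := by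
    have hs := otherNbr_spec G hd h
    rw [Finset.mem_erase]; exact ⟨hs.2, by simpa using hs.1⟩
  rw [ha, Finset.mem_singleton] at h1 h2
  rw [h1, h2]

/-- the chain starting `v0, v1` always turning to the new neighbor -/
noncomputable def chain (v0 v1 : V) : ℕ → V
  | 0 => v0
  | 1 => v1
  | (k+2) => otherNbr G (chain v0 v1 (k+1)) (chain v0 v1 k)

variable {v0 v1 : V} (h01 : G.Adj v0 v1)

lemma chain_succ (k : ℕ) :
    chain G v0 v1 (k+2) = otherNbr G (chain G v0 v1 (k+1)) (chain G v0 v1 k) := rfl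

include hd h01 in
lemma chain_adj : ∀ k, G.Adj (chain G v0 v1 k) (chain G v0 v1 (k+1)) := by
  intro k
  induction k with
  | zero => exact h01
  | succ m ih =>
    rw [chain_succ]
    exact (otherNbr_spec G hd ih.symm).1

include hd h01 in
lemma chain_ne (k : ℕ) : chain G v0 v1 (k+2) ≠ chain G v0 v1 k := by
  rw [chain_succ]
  exact (otherNbr_spec G hd (chain_adj G hd h01 k).symm).2

include hd h01 in
lemma chain_nbrFinset (k : ℕ) :
    G.neighborFinset (chain G v0 v1 (k+1)) = {chain G v0 v1 k, chain G v0 v1 (k+2)} := by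
  symm
  apply Finset.eq_of_subset_of_card_le
  · intro x hx
    rw [Finset.mem_insert, Finset.mem_singleton] at hx
    rcases hx with h | h <;> subst h
    · simpa using (chain_adj G hd h01 k).symm
    · simpa using (chain_adj G hd h01 (k+1))
  · rw [card_neighborFinset_eq_degree, hd, Finset.card_pair (Ne.symm (chain_ne G hd h01 k))]

include hd h01 in
lemma chain_back (k : ℕ) :
    chain G v0 v1 k = otherNbr G (chain G v0 v1 (k+1)) (chain G v0 v1 (k+2)) := by
  exact otherNbr_unique G hd (chain_adj G hd h01 (k+1)) (chain_adj G hd h01 k).symm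
    (Ne.symm (chain_ne G hd h01 k))

include hd h01 in
lemma chain_period_of_pair {i j : ℕ} (hij : i < j)
    (h1 : chain G v0 v1 i = chain G v0 v1 j)
    (h2 : chain G v0 v1 (i+1) = chain G v0 v1 (j+1)) :
    ∀ k, chain G v0 v1 (k + (j - i)) = chain G v0 v1 k := by
  set t := j - i with ht
  have hjt : j = i + t := by omega
  -- S k : pair at k matches pair at k+t
  set S : ℕ → Prop := fun k => chain G v0 v1 (k + t) = chain G v0 v1 k ∧
    chain G v0 v1 (k + 1 + t) = chain G v0 v1 (k+1) with hS
  have hSi : S i := by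
    constructor
    · show chain G v0 v1 (i + t) = chain G v0 v1 i
      rw [show i + t = j by omega]; exact h1.symm
    · show chain G v0 v1 (i + 1 + t) = chain G v0 v1 (i + 1)
      rw [show i + 1 + t = j + 1 by omega]; exact h2.symm
  have hup : ∀ k, S k → S (k+1) := by
    intro k hk
    refine ⟨hk.2, ?_⟩
    show chain G v0 v1 (k + 2 + t) = chain G v0 v1 (k + 2)
    rw [show k + 2 + t = (k + t) + 2 by omega, chain_succ, chain_succ,
      show k + t + 1 = k + 1 + t by omega, hk.1, hk.2]
  have hdown : ∀ k, S (k+1) → S k := by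
    intro k hk
    refine ⟨?_, hk.1⟩
    rw [chain_back G hd h01 (k+t), chain_back G hd h01 k,
      show k + t + 1 = k + 1 + t by omega, show k + t + 2 = k + 1 + 1 + t by omega,
      hk.1, hk.2]
  have h0 : S 0 := by
    have : ∀ m, S (i - m) := by
      intro m
      induction m with
      | zero => simpa using hSi
      | succ l ih =>
        rcases Nat.eq_zero_or_pos (i - l) with h | h
        · rwa [show i - (l+1) = i - l by omega]
        · have := hdown (i - l - 1) (by rwa [show i - l - 1 + 1 = i - l by omega])
          rwa [show i - (l+1) = i - l - 1 by omega]
    simpa using this i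
  have hall : ∀ k, S k := by
    intro k; induction k with
    | zero => exact h0
    | succ l ih => exact hup l ih
  exact fun k => (hall k).1

include hd h01 in
lemma chain_exists_period : ∃ t, 0 < t ∧ ∀ k, chain G v0 v1 (k + t) = chain G v0 v1 k := by
  obtain ⟨x, y, hxy, hf⟩ := Finite.exists_ne_map_eq_of_infinite
    (fun k : ℕ => (chain G v0 v1 k, chain G v0 v1 (k+1)))
  rcases Nat.lt_or_ge x y with h | h
  · exact ⟨y - x, by omega, chain_period_of_pair G hd h01 h
      (congrArg Prod.fst hf) (congrArg Prod.snd hf)⟩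
  · have h' : y < x := by omega
    exact ⟨x - y, by omega, chain_period_of_pair G hd h01 h'
      (congrArg Prod.fst hf).symm (congrArg Prod.snd hf).symm⟩

end Cycle

section CycleMain
variable {V : Type} [Fintype V] [DecidableEq V] (G : SimpleGraph V) [DecidableRel G.Adj]

lemma sub_val_one {N : ℕ} (h3 : 3 ≤ N) (u v : Fin N) (h : v.val = (u.val + 1) % N) :
    (v - u).val = 1 := by
  rw [Fin.sub_def]
  show (N - u.val + v.val) % N = 1
  rw [h, Nat.add_mod_mod, show N - u.val + (u.val + 1) = N + 1 by omega,
    Nat.add_mod_left, Nat.mod_eq_of_lt (by omega)]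

lemma iso_cycle (hconn : G.Connected) (hd : ∀ v : V, G.degree v = 2)
    (h3 : 3 ≤ Fintype.card V) : Nonempty (G ≃g cycleGraph (Fintype.card V)) := by
  classical
  set N := Fintype.card V with hN
  obtain ⟨v0⟩ := hconn.nonempty
  have hnbr0 : (G.neighborFinset v0).Nonempty := by
    rw [← Finset.card_pos, card_neighborFinset_eq_degree, hd]; norm_num
  obtain ⟨v1, hv1⟩ := hnbr0
  have h01 : G.Adj v0 v1 := by simpa using hv1
  set c : ℕ → V := chain G v0 v1 with hc
  have hex := chain_exists_period G hd h01
  set T := Nat.find hex with hTdef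
  obtain ⟨hTpos, hTper⟩ : 0 < T ∧ ∀ k, c (k + T) = c k := Nat.find_spec hex
  have hmin : ∀ t, 0 < t → (∀ k, c (k + t) = c k) → T ≤ t := by
    intro t ht hper
    exact Nat.find_le ⟨ht, hper⟩
  -- periodicity mod T
  have hmod : ∀ m, c m = c (m % T) := by
    intro m
    induction m using Nat.strong_induction_on with
    | _ m ih =>
      rcases Nat.lt_or_ge m T with h | h
      · rw [Nat.mod_eq_of_lt h]
      · have h1 : m = (m - T) + T := by omega
        rw [h1, hTper, ih (m - T) (by omega), Nat.add_mod_right]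
  -- injectivity on [0, T)
  have hinj : ∀ i j, i < T → j < T → c i = c j → i = j := by
    have key : ∀ i j, i < j → j < T → c i ≠ c j := by
      intro i j hij hjT heq
      set i' := i + T with hi'
      set j' := j + T with hj'
      have heq' : c i' = c j' := by rw [hTper, hTper]; exact heq
      have hnbr : ∀ m : ℕ, G.neighborFinset (c (m + 1)) = {c m, c (m + 2)} :=
        chain_nbrFinset G hd h01
      have hset : ({c (i' - 1), c (i' + 1)} : Finset V) = {c (j' - 1), c (j' + 1)} := by
        have e1 := hnbr (i' - 1)
        have e2 := hnbr (j' - 1)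
        rw [show i' - 1 + 1 = i' by omega, show i' - 1 + 2 = i' + 1 by omega] at e1
        rw [show j' - 1 + 1 = j' by omega, show j' - 1 + 2 = j' + 1 by omega] at e2
        rw [← e1, ← e2, heq']
      have hmem : c (i' + 1) ∈ ({c (j' - 1), c (j' + 1)} : Finset V) := by
        rw [← hset]; simp
      rw [Finset.mem_insert, Finset.mem_singleton] at hmem
      rcases hmem.symm with hcase | hcase
      · -- forward case: period j - i < T
        have hper := chain_period_of_pair G hd h01 (show i' < j' by omega)
          heq' hcase
        have := hmin (j' - i') (by omega) hper
        omega
      · -- reversal case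
        set D := j - i with hD
        have hDj : j' - i' = D := by omega
        have R : ∀ k, (k ≤ D → c (i' + k) = c (j' - k)) ∧
            (k + 1 ≤ D → c (i' + (k+1)) = c (j' - (k+1))) := by
          intro k
          induction k with
          | zero =>
            refine ⟨fun _ => by simpa using heq', fun _ => ?_⟩
            rw [show j' - (0+1) = j' - 1 by omega]; simpa using hcase
          | succ m ih =>
            refine ⟨ih.2, fun hk2 => ?_⟩
            have e1 : c (i' + m) = c (j' - m) := ih.1 (by omega)
            have e2 : c (i' + (m+1)) = c (j' - (m+1)) := ih.2 (by omega)
            have hfwd : c (i' + (m + 2)) = otherNbr G (c (i' + (m+1))) (c (i' + m)) := by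
              rw [show i' + (m + 2) = (i' + m) + 2 by omega]
              rw [show i' + (m + 1) = (i' + m) + 1 by omega] 
              exact chain_succ G (i' + m)
            have hbwd : c (j' - (m + 2)) = otherNbr G (c (j' - (m+1))) (c (j' - m)) := by
              have hb := chain_back G hd h01 (j' - (m + 2))
              rw [show j' - (m+2) + 1 = j' - (m+1) by omega,
                show j' - (m+2) + 2 = j' - m by omega] at hb
              exact hb
            rw [hfwd, hbwd, e1, e2]
        have hirr : ∀ m : ℕ, c m ≠ c (m + 1) := fun m => (chain_adj G hd h01 m).ne
        rcases Nat.even_or_odd D with ⟨m, hm⟩ | ⟨m, hm⟩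
        · -- D = 2m, m ≥ 1 : c (i'+m+1) = c (i'+m-1), contradict chain_ne
          have hm1 : 1 ≤ m := by omega
          have := (R m).2 (by omega)
          rw [show j' - (m+1) = i' + (m - 1) by omega] at this
          have hne := chain_ne G hd h01 (i' + (m - 1))
          rw [show i' + (m-1) + 2 = i' + (m+1) by omega] at hne
          exact hne this
        · -- D = 2m+1 : c (i'+m) = c (i'+m+1)
          have := (R m).1 (by omega)
          rw [show j' - m = i' + m + 1 by omega] at this
          exact hirr (i' + m) (by rw [this])
    intro i j hi hj heq
    rcases Nat.lt_trichotomy i j with h | h | h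
    · exact absurd heq (key i j h hj)
    · exact h
    · exact absurd heq.symm (key j i h hi)
  -- the image of chain is all of V, and T = N
  have hTleN : T ≤ N := by
    have : (Finset.range T).card ≤ (Finset.univ : Finset V).card := by
      apply Finset.card_le_card_of_injOn c (fun x _ => Finset.mem_univ _)
      intro a ha b hb hab
      exact hinj a b (Finset.mem_range.mp ha) (Finset.mem_range.mp hb) hab
    simpa using this
  set SS : Finset V := (Finset.range T).image c with hSS
  have hmemSS : ∀ m : ℕ, c m ∈ SS := by
    intro m
    rw [hSS, Finset.mem_image]
    exact ⟨m % T, Finset.mem_range.mpr (Nat.mod_lt _ hTpos), (hmod m).symm⟩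
  have hclosed : ∀ v w : V, v ∈ SS → G.Adj v w → w ∈ SS := by
    intro v w hv hadj
    rw [hSS, Finset.mem_image] at hv
    obtain ⟨k, _, hk⟩ := hv
    have hnbr := chain_nbrFinset G hd h01 (k + T - 1)
    rw [← hc] at hnbr
    rw [show k + T - 1 + 1 = k + T by omega, show k + T - 1 + 2 = k + T + 1 by omega,
      hTper] at hnbr
    have hw : w ∈ G.neighborFinset (c k) := by
      rw [SimpleGraph.mem_neighborFinset, hk]; exact hadj
    rw [hnbr, Finset.mem_insert, Finset.mem_singleton] at hw
    rcases hw with hw | hw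
    · rw [hw]; exact hmemSS _
    · rw [hw]; exact hmemSS _
  have hwalk : ∀ (u v : V), G.Walk u v → u ∈ SS → v ∈ SS := by
    intro u v w
    induction w with
    | nil => exact id
    | cons h q ih => exact fun hu => ih (hclosed _ _ hu h)
  have hSSuniv : SS = Finset.univ := by
    apply Finset.eq_univ_of_forall
    intro v
    obtain ⟨w⟩ := hconn.preconnected v0 v
    exact hwalk _ _ w (by exact hmemSS 0)
  have hNleT : N ≤ T := by
    calc N = (Finset.univ : Finset V).card := rfl
    _ = SS.card := by rw [hSSuniv]
    _ ≤ (Finset.range T).card := Finset.card_image_le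
    _ = T := Finset.card_range T
  have hTN : T = N := le_antisymm hTleN hNleT
  -- build the equivalence
  have hNpos : 0 < N := by omega
  have hinjf : Function.Injective (fun u : Fin N => c u.val) := by
    intro a b hab
    exact Fin.ext (hinj a.val b.val (by omega) (by omega) hab)
  have hbij : Function.Bijective (fun u : Fin N => c u.val) := by
    rw [Fintype.bijective_iff_injective_and_card]
    exact ⟨hinjf, by simpa using hN⟩
  set e := Equiv.ofBijective _ hbij with he
  have hmodN : ∀ m, c m = c (m % N) := by rw [← hTN]; exact hmod
  have hperN : ∀ k, c (k + N) = c k := by rw [← hTN]; exact hTper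
  have hinj_mod : ∀ s t : ℕ, c s = c t → s % N = t % N := by
    intro s t hst
    apply hinj (s % N) (t % N) (by rw [hTN]; exact Nat.mod_lt _ hNpos)
      (by rw [hTN]; exact Nat.mod_lt _ hNpos)
    rw [← hmodN, ← hmodN]; exact hst
  haveI : NeZero N := ⟨by omega⟩
  -- adjacency correspondence
  have hadj_iff : ∀ u v : Fin N, G.Adj (c u.val) (c v.val) ↔ (cycleGraph N).Adj u v := by
    intro u v
    rw [cycleGraph_adj']
    constructor
    · intro hadj
      have hnbr := chain_nbrFinset G hd h01 (u.val + N - 1)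
      rw [← hc] at hnbr
      rw [show u.val + N - 1 + 1 = u.val + N by omega,
        show u.val + N - 1 + 2 = u.val + N + 1 by omega, hperN] at hnbr
      have hv : c v.val ∈ G.neighborFinset (c u.val) := by
      
        rw [SimpleGraph.mem_neighborFinset]; exact hadj
      rw [hnbr, Finset.mem_insert, Finset.mem_singleton] at hv
      rcases hv with hv | hv
      · -- v ≡ u - 1 : (u - v).val = 1
        left
        have h1 : v.val % N = (u.val + N - 1) % N := hinj_mod _ _ hv
        rw [Nat.mod_eq_of_lt v.isLt] at h1
        apply sub_val_one h3
        rw [h1, Nat.mod_add_mod, show u.val + N - 1 + 1 = u.val + N by omega,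
          Nat.add_mod_right, Nat.mod_eq_of_lt u.isLt]
      · -- v ≡ u + 1 : (v - u).val = 1
        right
        have h1 : v.val % N = (u.val + N + 1) % N := hinj_mod _ _ hv
        rw [Nat.mod_eq_of_lt v.isLt, show u.val + N + 1 = (u.val + 1) + N by omega,
          Nat.add_mod_right] at h1
        exact sub_val_one h3 u v h1
    · intro hcyc
      have hstep : ∀ w : Fin N, G.Adj (c w.val) (c (w.val + 1)) := fun w =>
        chain_adj G hd h01 w.val
      have hval : ∀ w z : Fin N, (z - w).val = 1 → z.val = (w.val + 1) % N := by
        intro w z hz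
        have : z = w + 1 := by
          have h2 : w + (z - w) = z := add_sub_cancel w z
          rw [← h2]
          congr 1
          apply Fin.ext
          rw [hz, Fin.val_one']
          exact (Nat.mod_eq_of_lt (by omega)).symm
        rw [this, Fin.add_def, Fin.val_one']
        rw [Nat.mod_eq_of_lt (show (1:ℕ) < N by omega)]
      rcases hcyc with h | h
      · have := hval v u h
        have : c u.val = c (v.val + 1) := by rw [this, ← hmodN]
        rw [this]
        exact (hstep v).symm
      · have := hval u v h
        have : c v.val = c (u.val + 1) := by rw [this, ← hmodN]
        rw [this]
        exact hstep u
  exact ⟨(SimpleGraph.Iso.symm ⟨e, by intro u v; exact hadj_iff u v⟩ : G ≃g cycleGraph N)⟩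

end CycleMain

section Aut
variable {V : Type} [Fintype V] [DecidableEq V] (J : SimpleGraph V) (W Y Z : Finset V)

lemma sym2_map_fix {σ : Equiv.Perm V} {Y : Finset V} {e : Sym2 V}
    (hfix : ∀ v ∈ Y, σ v = v) (hY : ∀ x ∈ e, x ∈ Y) : Sym2.map σ e = e := by
  induction e using Sym2.ind with
  | _ x y =>
    rw [Sym2.map_pair_eq, hfix x (hY x (by simp)), hfix y (hY y (by simp))]

lemma rooted_anti (hWY : W ⊆ Y) : rootedEdges J Y Z ⊆ rootedEdges J W Z := by
  intro e he
  exact ⟨he.1, he.2.1, fun hall => he.2.2 (fun x hx => hWY (hall x hx))⟩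

lemma autWZ_pos_s6 : 1 ≤ autWZ J W Z := by
  refine Nat.one_le_iff_ne_zero.mpr (Nat.card_ne_zero.mpr ⟨⟨⟨1, ?_, ?_, ?_⟩⟩, inferInstance⟩)
  · intro v _; rfl
  · intro v _; rfl
  · intro e; simp

lemma perm_eq_one_of_fix_ne {σ : Equiv.Perm V} {a : V}
    (h : ∀ v, v ≠ a → σ v = v) : σ = 1 := by
  have ha : σ a = a := by
    by_contra hne
    have h1 : σ (σ a) = σ a := h (σ a) hne
    exact hne (σ.injective h1)
  refine Equiv.ext fun v => ?_
  by_cases hv : v = a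
  · rw [hv]; exact ha
  · exact h v hv

lemma autWZ_erase {a : V} (ha : a ∈ Z) : autWZ J (Z.erase a) Z = 1 := by
  rw [autWZ, Nat.card_eq_one_iff_unique]
  constructor
  · constructor
    intro σ τ
    apply Subtype.ext
    have hσ : σ.1 = 1 := perm_eq_one_of_fix_ne (fun v hv => by
      by_cases hvZ : v ∈ Z
      · exact σ.2.1 v (Finset.mem_erase.mpr ⟨hv, hvZ⟩)
      · exact σ.2.2.1 v hvZ)
    have hτ : τ.1 = 1 := perm_eq_one_of_fix_ne (fun v hv => by
      by_cases hvZ : v ∈ Z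
      · exact τ.2.1 v (Finset.mem_erase.mpr ⟨hv, hvZ⟩)
      · exact τ.2.2.1 v hvZ)
    rw [hσ, hτ]
  · exact ⟨⟨1, fun v _ => rfl, fun v _ => rfl, by simp⟩⟩

/-- the defining predicate of the automorphism group of `J[W,Z]` -/
def AutPred (σ : Equiv.Perm V) : Prop :=
  (∀ v ∈ W, σ v = v) ∧ (∀ v, v ∉ Z → σ v = v) ∧
     ∀ e, e ∈ rootedEdges J W Z ↔ Sym2.map σ e ∈ rootedEdges J W Z

lemma autWZ_eq_card : autWZ J W Z = Nat.card {σ : Equiv.Perm V // AutPred J W Z σ} := rfl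

lemma autPred_of_subset {σ : Equiv.Perm V} (hWY : W ⊆ Y) (hYZ : Y ⊆ Z)
    (h : AutPred J Y Z σ) : AutPred J W Z σ := by
  obtain ⟨hfix, hout, hiff⟩ := h
  have hfixinv : ∀ v ∈ Y, σ⁻¹ v = v := by
    intro v hv
    conv_lhs => rw [← hfix v hv]
    exact σ.symm_apply_apply v
  refine ⟨fun v hv => hfix v (hWY hv), hout, fun e => ?_⟩
  by_cases hY : ∀ x ∈ e, x ∈ Y
  · rw [sym2_map_fix hfix hY]
  · constructor
    · intro he
      have heY : e ∈ rootedEdges J Y Z := ⟨he.1, he.2.1, hY⟩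
      exact rooted_anti J W Y Z hWY ((hiff e).mp heY)
    · intro he
      by_cases hY2 : ∀ x ∈ Sym2.map σ e, x ∈ Y
      · have : e = Sym2.map σ e := by
          have h1 : Sym2.map (⇑σ⁻¹) (Sym2.map (⇑σ) e) = Sym2.map (⇑σ⁻¹) (Sym2.map (⇑σ) e) := rfl
          calc e = Sym2.map (⇑σ⁻¹) (Sym2.map (⇑σ) e) := by
                  rw [Sym2.map_map]
                  have : (⇑σ⁻¹ ∘ ⇑σ) = id := by
                    funext x; simp
                  rw [this, Sym2.map_id]; rfl
            _ = Sym2.map (⇑σ) e := sym2_map_fix hfixinv hY2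
        rw [this]; exact he
      · have : Sym2.map σ e ∈ rootedEdges J Y Z := ⟨he.1, he.2.1, hY2⟩
        exact rooted_anti J W Y Z hWY ((hiff e).mpr this)

lemma autWZ_mono (hWY : W ⊆ Y) (hYZ : Y ⊆ Z) : autWZ J Y Z ≤ autWZ J W Z := by
  rw [autWZ_eq_card, autWZ_eq_card]
  apply Nat.card_le_card_of_injective
    (fun σ => (⟨σ.1, autPred_of_subset J W Y Z hWY hYZ σ.2⟩ :
      {σ : Equiv.Perm V // AutPred J W Z σ}))
  intro σ τ h
  rw [Subtype.mk.injEq] at h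
  exact Subtype.ext h

lemma autPred_mul {σ τ : Equiv.Perm V} (hσ : AutPred J W Z σ) (hτ : AutPred J W Z τ) :
    AutPred J W Z (σ * τ) := by
  refine ⟨fun v hv => ?_, fun v hv => ?_, fun e => ?_⟩
  · show σ (τ v) = v
    rw [hτ.1 v hv, hσ.1 v hv]
  · show σ (τ v) = v
    rw [hτ.2.1 v hv, hσ.2.1 v hv]
  · have hmap : Sym2.map (⇑(σ * τ)) e = Sym2.map (⇑σ) (Sym2.map (⇑τ) e) := by
      rw [Sym2.map_map]; rfl
    rw [hmap]
    exact (hτ.2.2 e).trans (hσ.2.2 (Sym2.map (⇑τ) e))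

lemma perm_support_closed {σ : Equiv.Perm V} {S : Set V}
    (h : ∀ v, v ∉ S → σ v = v) {v : V} (hv : v ∈ S) : True := trivial

lemma autWZ_mul_le (Y1 Y2 : Finset V) (hWY1 : W ⊆ Y1) (hY1Z : Y1 ⊆ Z)
    (hWY2 : W ⊆ Y2) (hY2Z : Y2 ⊆ Z) (hunion : ∀ v ∈ Z, v ∈ Y1 ∨ v ∈ Y2) :
    autWZ J Y1 Z * autWZ J Y2 Z ≤ autWZ J W Z := by
  rw [autWZ_eq_card, autWZ_eq_card, autWZ_eq_card, ← Nat.card_prod]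
  apply Nat.card_le_card_of_injective
    (fun στ : {σ : Equiv.Perm V // AutPred J Y1 Z σ} × {σ : Equiv.Perm V // AutPred J Y2 Z σ} =>
      (⟨στ.1.1 * στ.2.1, autPred_mul J W Z
        (autPred_of_subset J W Y1 Z hWY1 hY1Z στ.1.2)
        (autPred_of_subset J W Y2 Z hWY2 hY2Z στ.2.2)⟩ :
        {σ : Equiv.Perm V // AutPred J W Z σ}))
  rintro ⟨⟨σ1, hσ1⟩, ⟨τ1, hτ1⟩⟩ ⟨⟨σ2, hσ2⟩, ⟨τ2, hτ2⟩⟩ h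
  have h' : σ1 * τ1 = σ2 * τ2 := congrArg Subtype.val h
  have hσ : σ1 = σ2 := by
    refine Equiv.ext fun v => ?_
    by_cases hvZ : v ∈ Z
    · rcases hunion v hvZ with hv1 | hv2
      · rw [hσ1.1 v hv1, hσ2.1 v hv1]
      · have e1 : σ1 (τ1 v) = σ2 (τ2 v) := by
          have h2 := congrArg (fun (π : Equiv.Perm V) => π v) h'
          simpa using h2
        rwa [hτ1.1 v hv2, hτ2.1 v hv2] at e1
    · rw [hσ1.2.1 v hvZ, hσ2.2.1 v hvZ]
  have hτ : τ1 = τ2 := by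
    rw [hσ] at h'
    exact mul_left_cancel h'
  simp only [Prod.mk.injEq, Subtype.mk.injEq]
  exact ⟨hσ, hτ⟩

end Aut

section Edges
variable {V : Type} [Fintype V] [DecidableEq V] (J : SimpleGraph V) (W Z : Finset V)

lemma natCard_set_union {s t : Set (Sym2 V)} (h : Disjoint s t) :
    Nat.card ↥(s ∪ t) = Nat.card ↥s + Nat.card ↥t := by
  rw [Nat.card_coe_set_eq, Nat.card_coe_set_eq, Nat.card_coe_set_eq]
  exact Set.ncard_union_eq h (Set.toFinite s) (Set.toFinite t)

lemma natCard_eq_filter {α : Type} [Fintype α] (P : α → Prop) [DecidablePred P] :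
    Nat.card {x | P x} = (Finset.univ.filter P).card := by
  rw [Nat.card_eq_fintype_card]
  simpa using Fintype.card_subtype P

/-- rooted edges after deleting one vertex from `Z` -/
lemma rooted_erase {a : V} (ha : a ∈ Z) :
    rootedEdges J (Z.erase a) Z = {e | e ∈ J.edgeSet ∧ a ∈ e ∧ ∀ x ∈ e, x ∈ Z} := by
  ext e
  constructor
  · rintro ⟨he, hZ, hW⟩
    refine ⟨he, ?_, hZ⟩
    by_contra hae
    exact hW (fun x hx => Finset.mem_erase.mpr ⟨fun hxa => hae (hxa ▸ hx), hZ x hx⟩)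
  · rintro ⟨he, hae, hZ⟩
    exact ⟨he, hZ, fun hall => (Finset.mem_erase.mp (hall a hae)).1 rfl⟩

/-- rooted edges after adding one vertex to `W`: the decomposition -/
lemma rooted_insert {a : V} (ha : a ∈ Z) (haW : a ∉ W) (hWZ : W ⊆ Z) :
    rootedEdges J W Z = rootedEdges J (insert a W) Z ∪
      {e | e ∈ J.edgeSet ∧ a ∈ e ∧ ∀ x ∈ e, x ∈ insert a W} := by
  ext e
  constructor
  · rintro ⟨he, hZ, hW⟩
    by_cases hY : ∀ x ∈ e, x ∈ insert a W
    · right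
      refine ⟨he, ?_, hY⟩
      by_contra hae
      exact hW (fun x hx => by
        rcases Finset.mem_insert.mp (hY x hx) with h | h
        · exact absurd (h ▸ hx) hae
        · exact h)
    · exact Or.inl ⟨he, hZ, hY⟩
  · rintro (⟨he, hZ, hW⟩ | ⟨he, hae, hY⟩)
    · exact ⟨he, hZ, fun hall => hW (fun x hx => Finset.mem_insert_of_mem (hall x hx))⟩
    · refine ⟨he, fun x hx => ?_, fun hall => haW (hall a hae)⟩
      rcases Finset.mem_insert.mp (hY x hx) with h | h
      · exact h ▸ ha
      · exact hWZ h

lemma rooted_insert_disj {a : V} (haW : a ∉ W) :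
    Disjoint (rootedEdges J (insert a W) Z)
      {e | e ∈ J.edgeSet ∧ a ∈ e ∧ ∀ x ∈ e, x ∈ insert a W} := by
  rw [Set.disjoint_left]
  rintro e ⟨_, _, hW⟩ ⟨_, _, hY⟩
  exact hW hY

lemma eWZ_insert {a : V} (ha : a ∈ Z) (haW : a ∉ W) (hWZ : W ⊆ Z) :
    eWZ J W Z = eWZ J (insert a W) Z +
      Nat.card {e | e ∈ J.edgeSet ∧ a ∈ e ∧ ∀ x ∈ e, x ∈ insert a W} := by
  rw [eWZ, rooted_insert J W Z ha haW hWZ, natCard_set_union (rooted_insert_disj J W Z haW)]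
  rfl

end Edges

lemma adj_of_mem_edge {V : Type} (J : SimpleGraph V) {e : Sym2 V} (he : e ∈ J.edgeSet)
    {u v : V} (hu : u ∈ e) (hv : v ∈ e) (huv : u ≠ v) : J.Adj u v := by
  induction e using Sym2.ind with
  | _ x y =>
    rw [Sym2.mem_iff] at hu hv
    rw [SimpleGraph.mem_edgeSet] at he
    rcases hu with rfl | rfl <;> rcases hv with rfl | rfl
    · exact absurd rfl huv
    · exact he
    · exact he.symm
    · exact absurd rfl huv

end AUX

/-- Proposition 2.3(c): if `J[W,Z]` is `p`-leading, `p ≥ 1/n`, `|A| ≥ 2` and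
`μ_p(W,Z) ≥ 1`, where `A = Z \ W` and `B = N(A) ∩ W`, then
`e(B,A) ≥ max{|A|, |B|+1}`, and `e(B,A) > |A|` unless `B = ∅` and `J[A]` is a cycle. -/
theorem leading_edge_count {n : ℕ} {p : ℝ} (hp0 : 0 ≤ p) (hp1 : p ≤ 1)
    (hp : 1 / (n : ℝ) ≤ p)
    (J : SimpleGraph (Fin n)) (W Z : Finset (Fin n)) (hWZ : W ⊂ Z)
    (hA2 : 2 ≤ (Z \ W).card) (hlead : Leading n p J W Z) (hmu : 1 ≤ mu n p J W Z)
    (A B : Finset (Fin n)) (hAdef : A = Z \ W)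
    (hBdef : ∀ w, w ∈ B ↔ w ∈ W ∧ ∃ a ∈ A, J.Adj w a) :
    max A.card (B.card + 1) ≤ eAB J A B ∧
      (¬ (B = ∅ ∧ Nonempty ((J.induce (A : Set (Fin n))) ≃g SimpleGraph.cycleGraph A.card)) →
        A.card < eAB J A B) := by
  classical
  -- ambient facts
  have hWsubZ : W ⊆ Z := hWZ.subset
  have hAZ : A ⊆ Z := by rw [hAdef]; exact Finset.sdiff_subset
  have hAnW : ∀ a ∈ A, a ∉ W := by
    intro a ha; rw [hAdef] at ha; exact (Finset.mem_sdiff.mp ha).2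
  have hAmem : ∀ x, x ∈ Z → x ∉ W → x ∈ A := by
    intro x h1 h2; rw [hAdef]; exact Finset.mem_sdiff.mpr ⟨h1, h2⟩
  have hA2' : 2 ≤ A.card := by rw [hAdef]; exact hA2
  have hAne : A.Nonempty := Finset.card_pos.mp (by omega)
  have hBW : ∀ b ∈ B, b ∈ W := fun b hb => ((hBdef b).mp hb).1
  have hBZ : ∀ b ∈ B, b ∈ Z := fun b hb => hWsubZ (hBW b hb)
  have hABd : ∀ x, x ∈ A → x ∉ B := fun x hx hB => hAnW x hx (hBW x hB)
  have hABsubZ : ∀ x, x ∈ A ∪ B → x ∈ Z := by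
    intro x hx
    rcases Finset.mem_union.mp hx with h | h
    · exact hAZ h
    · exact hBZ x h
  have hn2 : 2 ≤ n := by
    calc 2 ≤ A.card := hA2'
    _ ≤ (Finset.univ : Finset (Fin n)).card := Finset.card_le_univ A
    _ = n := by simp
  have hn0 : (0:ℝ) < n := by positivity
  have hppos : (0:ℝ) < p := lt_of_lt_of_le (by positivity) hp
  have hnp : (1:ℝ) ≤ n * p := by
    rw [div_le_iff₀ hn0] at hp
    linarith [hp]
  -- the edge set as a finset
  set P : Sym2 (Fin n) → Prop :=
    fun e => e ∈ J.edgeSet ∧ (∃ x ∈ e, x ∈ A) ∧ ∀ x ∈ e, x ∈ A ∪ B with hPdef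
  set EF : Finset (Sym2 (Fin n)) := Finset.univ.filter P with hEFdef
  have hmemEF : ∀ e, e ∈ EF ↔ P e := by
    intro e; rw [hEFdef, Finset.mem_filter]; simp
  have hEcard : eAB J A B = EF.card := by
    rw [eAB, hEFdef]
    exact natCard_eq_filter P
  -- rooted edges of (W,Z) are exactly the P-edges
  have hroot : rootedEdges J W Z = {e | P e} := by
    ext e
    constructor
    · rintro ⟨he, hZ, hW⟩
      push_neg at hW
      obtain ⟨x0, hx0e, hx0W⟩ := hW
      have hx0A : x0 ∈ A := hAmem x0 (hZ x0 hx0e) hx0W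
      refine ⟨he, ⟨x0, hx0e, hx0A⟩, ?_⟩
      intro x hx
      by_cases hxW : x ∈ W
      · refine Finset.mem_union_right _ ((hBdef x).mpr ⟨hxW, x0, hx0A, ?_⟩)
        exact adj_of_mem_edge J he hx hx0e (fun hxx => hx0W (hxx ▸ hxW))
      · exact Finset.mem_union_left _ (hAmem x (hZ x hx) hxW)
    · rintro ⟨he, ⟨x0, hx0e, hx0A⟩, hAB⟩
      refine ⟨he, fun x hx => hABsubZ x (hAB x hx), fun hall => hAnW x0 hx0A (hall x0 hx0e)⟩
  have heWZ : eWZ J W Z = EF.card := by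
    rw [eWZ, hroot, hEFdef]
    exact natCard_eq_filter P
  -- vertex degrees within the rooted graph
  set dZ : Fin n → ℕ := fun a => (EF.filter (fun e => a ∈ e)).card with hdZdef
  have hDZset : ∀ a ∈ A, {e : Sym2 (Fin n) | e ∈ J.edgeSet ∧ a ∈ e ∧ ∀ x ∈ e, x ∈ Z}
      = {e | P e ∧ a ∈ e} := by
    intro a ha
    ext e
    constructor
    · rintro ⟨he, hae, hZ⟩
      refine ⟨⟨he, ⟨a, hae, ha⟩, ?_⟩, hae⟩
      intro x hx
      by_cases hxW : x ∈ W
      · refine Finset.mem_union_right _ ((hBdef x).mpr ⟨hxW, a, ha, ?_⟩)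
        exact adj_of_mem_edge J he hx hae (fun hxa => hAnW a ha (hxa ▸ hxW))
      · exact Finset.mem_union_left _ (hAmem x (hZ x hx) hxW)
    · rintro ⟨⟨he, _, hAB⟩, hae⟩
      exact ⟨he, hae, fun x hx => hABsubZ x (hAB x hx)⟩
  have hDZcard : ∀ a ∈ A,
      Nat.card {e : Sym2 (Fin n) | e ∈ J.edgeSet ∧ a ∈ e ∧ ∀ x ∈ e, x ∈ Z} = dZ a := by
    intro a ha
    rw [hDZset a ha]
    have h1 : Nat.card {e : Sym2 (Fin n) | P e ∧ a ∈ e}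
        = (Finset.univ.filter (fun e => P e ∧ a ∈ e)).card := natCard_eq_filter _
    simp only [hdZdef, hEFdef, Finset.filter_filter]
    exact h1
  -- K1 : n * p ^ dZ a < 1
  have hK1 : ∀ a ∈ A, (n:ℝ) * p ^ (dZ a) < 1 := by
    intro a ha
    have haZ : a ∈ Z := hAZ ha
    obtain ⟨b, hb, hba⟩ := Finset.exists_mem_ne (by omega : 1 < A.card) a
    have h1 : W ⊂ Z.erase a := by
      rw [Finset.ssubset_def]
      constructor
      · intro w hw
        exact Finset.mem_erase.mpr ⟨fun h => hAnW a ha (h ▸ hw), hWsubZ hw⟩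
      · intro hsub
        exact hAnW b hb (hsub (Finset.mem_erase.mpr ⟨hba, hAZ hb⟩))
    have h2 : Z.erase a ⊂ Z := Finset.erase_ssubset haZ
    have hlt := hlead _ h1 h2
    simp only [mu] at hlt
    have hZd : Z \ Z.erase a = {a} := by
      ext x
      simp only [Finset.mem_sdiff, Finset.mem_erase, Finset.mem_singleton]
      constructor
      · rintro ⟨hxZ, hx⟩
        by_contra hxa
        exact hx ⟨hxa, hxZ⟩
      · rintro rfl
        exact ⟨haZ, fun h => h.1 rfl⟩
    have heY : eWZ J (Z.erase a) Z = dZ a := by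
      rw [eWZ, rooted_erase J Z haZ]
      exact hDZcard a ha
    have haut : autWZ J (Z.erase a) Z = 1 := autWZ_erase J Z haZ
    rw [hZd, heY, haut] at hlt
    simpa using hlt
  -- degrees are at least 2
  have hd2 : ∀ a ∈ A, 2 ≤ dZ a := by
    intro a ha
    by_contra hc
    push_neg at hc
    have hK := hK1 a ha
    have hn2' : (2:ℝ) ≤ n := by exact_mod_cast hn2
    have hc' : dZ a = 0 ∨ dZ a = 1 := by omega
    rcases hc' with h | h <;> rw [h] at hK
    · rw [pow_zero, mul_one] at hK
      linarith
    · rw [pow_one] at hK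
      linarith
  -- handshake
  have hsum_eq : ∑ a ∈ A, dZ a = ∑ e ∈ EF, (A.filter (fun x => x ∈ e)).card := by
    simp only [hdZdef, Finset.card_filter]
    exact Finset.sum_comm
  have hw2 : ∀ e ∈ EF, (A.filter (fun x => x ∈ e)).card ≤ 2 := by
    intro e he
    induction e using Sym2.ind with
    | _ x y =>
      have hsub : A.filter (fun z => z ∈ s(x, y)) ⊆ {x, y} := by
        intro z hz
        have := (Finset.mem_filter.mp hz).2
        rw [Sym2.mem_iff] at this
        rcases this with rfl | rfl
        · exact Finset.mem_insert_self _ _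
        · exact Finset.mem_insert_of_mem (Finset.mem_singleton_self _)
      calc (A.filter (fun z => z ∈ s(x, y))).card ≤ ({x, y} : Finset (Fin n)).card :=
            Finset.card_le_card hsub
      _ ≤ 2 := Finset.card_insert_le x {y} |>.trans (by simp)
  have hsum_ub : ∑ a ∈ A, dZ a ≤ 2 * EF.card := by
    rw [hsum_eq]
    calc ∑ e ∈ EF, (A.filter (fun x => x ∈ e)).card ≤ ∑ _e ∈ EF, 2 :=
          Finset.sum_le_sum hw2
    _ = 2 * EF.card := by rw [Finset.sum_const, smul_eq_mul, mul_comm]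
  have hsum_lb : 2 * A.card ≤ ∑ a ∈ A, dZ a := by
    calc 2 * A.card = ∑ _a ∈ A, 2 := by rw [Finset.sum_const, smul_eq_mul, mul_comm]
    _ ≤ ∑ a ∈ A, dZ a := Finset.sum_le_sum hd2
  have hmain1 : A.card ≤ EF.card := by omega
  -- K2/K3 : every vertex of A has a neighbor inside A
  have hK2 : ∀ a ∈ A, ∃ y ∈ A, J.Adj a y := by
    intro a ha
    have haZ : a ∈ Z := hAZ ha
    obtain ⟨b, hb, hba⟩ := Finset.exists_mem_ne (by omega : 1 < A.card) a
    set DB : Set (Sym2 (Fin n)) :=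
      {e | e ∈ J.edgeSet ∧ a ∈ e ∧ ∀ x ∈ e, x ∈ insert a W} with hDBdef
    -- leading inequality at Y = insert a W
    have h1 : W ⊂ insert a W := Finset.ssubset_insert (hAnW a ha)
    have h2 : insert a W ⊂ Z := by
      rw [Finset.ssubset_def]
      constructor
      · exact Finset.insert_subset haZ hWsubZ
      · intro hsub
        have := hsub (hAZ hb)
        rcases Finset.mem_insert.mp this with h | h
        · exact hba h
        · exact hAnW b hb h
    have hlt := hlead _ h1 h2
    simp only [mu] at hlt
    have hcard1 : (Z \ insert a W).card = A.card - 1 := by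
      have : Z \ insert a W = A.erase a := by
        ext x
        simp only [Finset.mem_sdiff, Finset.mem_insert, Finset.mem_erase, hAdef]
        tauto
      rw [this, Finset.card_erase_of_mem ha]
    have hsplit := eWZ_insert J W Z haZ (hAnW a ha) hWsubZ
    rw [← hDBdef] at hsplit
    have hmono : autWZ J (insert a W) Z ≤ autWZ J W Z :=
      autWZ_mono J W (insert a W) Z (Finset.subset_insert a W) (Finset.insert_subset haZ hWsubZ)
    have hposY : (0:ℝ) < (autWZ J (insert a W) Z : ℝ) := by
      have := autWZ_pos_s6 J (insert a W) Z
      exact_mod_cast this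
    have hposW : (0:ℝ) < (autWZ J W Z : ℝ) := by
      have := autWZ_pos_s6 J W Z
      exact_mod_cast this
    simp only [mu] at hmu
    have hWle : (autWZ J W Z : ℝ) ≤ (n:ℝ) ^ (Z \ W).card * p ^ (eWZ J W Z) :=
      (one_le_div hposW).mp hmu
    have hYlt : (n:ℝ) ^ (Z \ insert a W).card * p ^ (eWZ J (insert a W) Z)
        < (autWZ J (insert a W) Z : ℝ) := (div_lt_one hposY).mp hlt
    have hcardA : (Z \ W).card = A.card := by rw [hAdef]
    have hchain : (n:ℝ) ^ (A.card - 1) * p ^ (eWZ J (insert a W) Z)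
        < (n:ℝ) ^ A.card * p ^ (eWZ J (insert a W) Z + Nat.card DB) := by
      rw [← hsplit, ← hcard1, ← hcardA]
      calc (n:ℝ) ^ (Z \ insert a W).card * p ^ (eWZ J (insert a W) Z)
          < (autWZ J (insert a W) Z : ℝ) := hYlt
      _ ≤ (autWZ J W Z : ℝ) := by exact_mod_cast hmono
      _ ≤ (n:ℝ) ^ (Z \ W).card * p ^ (eWZ J W Z) := hWle
    have hnpDB : 1 < (n:ℝ) * p ^ (Nat.card DB) := by
      have hAc : (n:ℝ) ^ A.card = (n:ℝ) ^ (A.card - 1) * n := by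
        rw [← pow_succ]
        congr 1
        omega
      rw [hAc, pow_add] at hchain
      have hpos2 : (0:ℝ) < (n:ℝ) ^ (A.card - 1) * p ^ (eWZ J (insert a W) Z) := by
        positivity
      have hring : (n:ℝ) ^ (A.card - 1) * n *
          (p ^ (eWZ J (insert a W) Z) * p ^ (Nat.card DB)) =
          ((n:ℝ) * p ^ (Nat.card DB)) * ((n:ℝ) ^ (A.card - 1) * p ^ (eWZ J (insert a W) Z)) := by
        ring
      rw [hring] at hchain
      by_contra hle
      push_neg at hle
      nlinarith [hpos2, hchain, hle]
    -- compare with K1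
    have hDZsub : DB ⊆ {e : Sym2 (Fin n) | e ∈ J.edgeSet ∧ a ∈ e ∧ ∀ x ∈ e, x ∈ Z} := by
      rintro e ⟨he, hae, hY⟩
      refine ⟨he, hae, fun x hx => ?_⟩
      rcases Finset.mem_insert.mp (hY x hx) with h | h
      · exact h ▸ haZ
      · exact hWsubZ h
    have hcardlt : Nat.card DB < dZ a := by
      by_contra hge
      push_neg at hge
      have hplt : p ^ (Nat.card DB) ≤ p ^ (dZ a) :=
        pow_le_pow_of_le_one hp0 hp1 hge
      have := hK1 a ha
      nlinarith [hplt, this, hnpDB, hn0]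
    have hcardle : Nat.card DB ≤ Nat.card
        {e : Sym2 (Fin n) | e ∈ J.edgeSet ∧ a ∈ e ∧ ∀ x ∈ e, x ∈ Z} := by
      rw [Nat.card_coe_set_eq, Nat.card_coe_set_eq]
      exact Set.ncard_le_ncard hDZsub (Set.toFinite _)
    have hne : ∃ e, e ∈ {e : Sym2 (Fin n) | e ∈ J.edgeSet ∧ a ∈ e ∧ ∀ x ∈ e, x ∈ Z}
        ∧ e ∉ DB := by
      by_contra hno
      push_neg at hno
      have hsub2 : {e : Sym2 (Fin n) | e ∈ J.edgeSet ∧ a ∈ e ∧ ∀ x ∈ e, x ∈ Z} ⊆ DB := hno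
      have : Nat.card {e : Sym2 (Fin n) | e ∈ J.edgeSet ∧ a ∈ e ∧ ∀ x ∈ e, x ∈ Z}
          ≤ Nat.card DB := by
        rw [Nat.card_coe_set_eq, Nat.card_coe_set_eq]
        exact Set.ncard_le_ncard hsub2 (Set.toFinite _)
      rw [hDZcard a ha] at this
      omega
    obtain ⟨e0, ⟨he0, hae0, hZ0⟩, he0DB⟩ := hne
    have : ∃ x ∈ e0, x ∉ insert a W := by
      by_contra hno
      push_neg at hno
      exact he0DB ⟨he0, hae0, hno⟩
    obtain ⟨y, hye, hyY⟩ := this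
    have hya : y ≠ a := fun h => hyY (h ▸ Finset.mem_insert_self a W)
    have hyA : y ∈ A := hAmem y (hZ0 y hye) (fun h => hyY (Finset.mem_insert_of_mem h))
    exact ⟨y, hyA, adj_of_mem_edge J he0 hae0 hye (Ne.symm hya)⟩
  -- an edge fully inside A
  obtain ⟨a0, ha0⟩ := hAne
  obtain ⟨y0, hy0A, hy0adj⟩ := hK2 a0 ha0
  have he0EF : s(a0, y0) ∈ EF := by
    rw [hmemEF]
    refine ⟨J.mem_edgeSet.mpr hy0adj, ⟨a0, by simp, ha0⟩, ?_⟩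
    intro x hx
    rw [Sym2.mem_iff] at hx
    rcases hx with rfl | rfl
    · exact Finset.mem_union_left _ ha0
    · exact Finset.mem_union_left _ hy0A
  -- injection from B into the edges
  set f : Fin n → Sym2 (Fin n) :=
    fun b => if hb : ∃ a ∈ A, J.Adj b a then s(b, hb.choose) else s(b, b) with hfdef
  have hfB : ∀ b ∈ B, ∃ c, c ∈ A ∧ J.Adj b c ∧ f b = s(b, c) := by
    intro b hb
    have hex : ∃ a ∈ A, J.Adj b a := ((hBdef b).mp hb).2
    obtain ⟨hc1, hc2⟩ := hex.choose_spec
    exact ⟨hex.choose, hc1, hc2, by rw [hfdef]; exact dif_pos hex⟩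
  have himage : B.image f ⊆ EF := by
    intro e he
    obtain ⟨b, hb, rfl⟩ := Finset.mem_image.mp he
    obtain ⟨c, hcA, hcadj, hfb⟩ := hfB b hb
    rw [hfb, hmemEF]
    refine ⟨J.mem_edgeSet.mpr hcadj, ⟨c, by simp, hcA⟩, ?_⟩
    intro x hx
    rw [Sym2.mem_iff] at hx
    rcases hx with rfl | rfl
    · exact Finset.mem_union_right _ hb
    · exact Finset.mem_union_left _ hcA
  have hinjf : ∀ x ∈ B, ∀ y ∈ B, f x = f y → x = y := by
    intro x hx y hy hxy
    obtain ⟨cx, hcxA, _, hfx⟩ := hfB x hx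
    obtain ⟨cy, hcyA, _, hfy⟩ := hfB y hy
    rw [hfx, hfy, Sym2.eq_iff] at hxy
    rcases hxy with ⟨h1, _⟩ | ⟨h1, h2⟩
    · exact h1
    · exact absurd hy (hABd y (h2 ▸ hcxA))
  have hnotin : s(a0, y0) ∉ B.image f := by
    intro hmem
    obtain ⟨b, hb, hfb⟩ := Finset.mem_image.mp hmem
    obtain ⟨c, hcA, _, hfb'⟩ := hfB b hb
    rw [hfb'] at hfb
    rw [Sym2.eq_iff] at hfb
    rcases hfb with ⟨h1, _⟩ | ⟨h1, _⟩
    · exact hABd a0 ha0 (h1 ▸ hb)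
    · exact hABd y0 hy0A (h1 ▸ hb)
  have hmain2 : B.card + 1 ≤ EF.card := by
    have h1 : (B.image f).card < EF.card :=
      Finset.card_lt_card ((Finset.ssubset_iff_of_subset himage).mpr
        ⟨s(a0, y0), he0EF, hnotin⟩)
    have h2 : (B.image f).card = B.card := Finset.card_image_of_injOn hinjf
    omega
  refine ⟨by rw [hEcard]; exact max_le hmain1 hmain2, ?_⟩
  -- Part 2
  intro hnot
  rw [hEcard]
  by_contra hle
  push_neg at hle
  have hEA : EF.card = A.card := le_antisymm hle hmain1
  -- equality in the handshake
  have hsum2 : ∑ a ∈ A, dZ a = 2 * A.card := by omega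
  have hdeq : ∀ a ∈ A, dZ a = 2 := by
    intro a ha
    by_contra hne
    have h3 : 3 ≤ dZ a := by
      have := hd2 a ha
      omega
    have hlt : ∑ _a ∈ A, 2 < ∑ a ∈ A, dZ a :=
      Finset.sum_lt_sum hd2 ⟨a, ha, by omega⟩
    rw [Finset.sum_const, smul_eq_mul, mul_comm] at hlt
    omega
  have hweq : ∀ e ∈ EF, (A.filter (fun x => x ∈ e)).card = 2 := by
    intro e he
    by_contra hne
    have hlt : ∑ e ∈ EF, (A.filter (fun x => x ∈ e)).card < ∑ _e ∈ EF, 2 :=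
      Finset.sum_lt_sum hw2 ⟨e, he, by
        have := hw2 e he
        omega⟩
    rw [Finset.sum_const, smul_eq_mul, mul_comm] at hlt
    omega
  -- every counted edge lies inside A
  have hbothA : ∀ e ∈ EF, ∀ x ∈ e, x ∈ A := by
    intro e he
    induction e using Sym2.ind with
    | _ u v =>
      intro x hx
      have hw := hweq _ he
      have hsub : A.filter (fun z => z ∈ s(u, v)) ⊆ {u, v} := by
        intro z hz
        have := (Finset.mem_filter.mp hz).2
        rw [Sym2.mem_iff] at this
        rcases this with rfl | rfl
        · exact Finset.mem_insert_self _ _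
        · exact Finset.mem_insert_of_mem (Finset.mem_singleton_self _)
      have hcard2 : ({u, v} : Finset (Fin n)).card ≤ 2 :=
        (Finset.card_insert_le u {v}).trans (by simp)
      have heqf : A.filter (fun z => z ∈ s(u, v)) = {u, v} :=
        Finset.eq_of_subset_of_card_le hsub (by omega)
      rw [Sym2.mem_iff] at hx
      rcases hx with rfl | rfl
      · exact (Finset.mem_filter.mp (heqf ▸ Finset.mem_insert_self x {v})).1
      · exact (Finset.mem_filter.mp (heqf ▸ Finset.mem_insert_of_mem
          (Finset.mem_singleton_self x))).1
  have hBempty : B = ∅ := by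
    rw [Finset.eq_empty_iff_forall_notMem]
    intro b hb
    obtain ⟨c, hcA, hcadj, hfb⟩ := hfB b hb
    have hfEF : f b ∈ EF := himage (Finset.mem_image_of_mem f hb)
    have hbA : b ∈ A := hbothA (f b) hfEF b (by rw [hfb]; simp)
    exact hABd b hbA hb
  -- induced degree is 2
  have hdA : ∀ a, ∀ ha : a ∈ A, (A.filter (fun y => J.Adj a y)).card = 2 := by
    intro a ha
    rw [← hdeq a ha]
    apply Finset.card_bij (fun y _ => s(a, y))
    · intro y hy
      obtain ⟨hyA, hyadj⟩ := Finset.mem_filter.mp hy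
      refine Finset.mem_filter.mpr ⟨?_, by simp⟩
      rw [hmemEF]
      refine ⟨J.mem_edgeSet.mpr hyadj, ⟨a, by simp, ha⟩, ?_⟩
      intro x hx
      rw [Sym2.mem_iff] at hx
      rcases hx with rfl | rfl
      · exact Finset.mem_union_left _ ha
      · exact Finset.mem_union_left _ hyA
    · intro y1 hy1 y2 hy2 heq12
      rw [Sym2.eq_iff] at heq12
      rcases heq12 with ⟨_, h⟩ | ⟨h1, h2⟩
      · exact h
      · rw [← h1, h2]
    · intro e he
      obtain ⟨heEF, hae⟩ := Finset.mem_filter.mp he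
      have hedge : e ∈ J.edgeSet := ((hmemEF e).mp heEF).1
      induction e using Sym2.ind with
      | _ u v =>
        have huv : J.Adj u v := J.mem_edgeSet.mp hedge
        rw [Sym2.mem_iff] at hae
        rcases hae with rfl | rfl
        · refine ⟨v, Finset.mem_filter.mpr ⟨hbothA _ heEF v (by simp), huv⟩, rfl⟩
        · refine ⟨u, Finset.mem_filter.mpr ⟨hbothA _ heEF u (by simp), huv.symm⟩, ?_⟩
          rw [Sym2.eq_swap]
  -- |A| ≥ 3
  have hA3 : 3 ≤ A.card := by
    have h2' := hdA a0 ha0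
    obtain ⟨y1, hy1, y2, hy2, hy12⟩ := Finset.one_lt_card.mp (by omega :
      1 < (A.filter (fun y => J.Adj a0 y)).card)
    obtain ⟨hy1A, hy1adj⟩ := Finset.mem_filter.mp hy1
    obtain ⟨hy2A, hy2adj⟩ := Finset.mem_filter.mp hy2
    have hsub3 : ({a0, y1, y2} : Finset (Fin n)) ⊆ A := by
      intro x hx
      rcases Finset.mem_insert.mp hx with rfl | hx
      · exact ha0
      rcases Finset.mem_insert.mp hx with rfl | hx
      · exact hy1A
      · exact (Finset.mem_singleton.mp hx) ▸ hy2A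
    have hc3 : ({a0, y1, y2} : Finset (Fin n)).card = 3 := by
      rw [Finset.card_insert_of_notMem, Finset.card_insert_of_notMem, Finset.card_singleton]
      · simpa using hy12
      · simp only [Finset.mem_insert, Finset.mem_singleton]
        push_neg
        exact ⟨fun h => J.irrefl (h ▸ hy1adj), fun h => J.irrefl (h ▸ hy2adj)⟩
    calc 3 = ({a0, y1, y2} : Finset (Fin n)).card := hc3.symm
    _ ≤ A.card := Finset.card_le_card hsub3
  -- the induced graph on A
  set As : Set (Fin n) := (↑A : Set (Fin n)) with hAsdef
  set G' : SimpleGraph As := J.induce As with hG'def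
  haveI : DecidableRel G'.Adj := Classical.decRel _
  have ha0S : a0 ∈ As := by rw [hAsdef]; exact Finset.mem_coe.mpr ha0
  set C : Finset (Fin n) := A.filter
    (fun x => ∃ hx : x ∈ As, G'.Reachable ⟨a0, ha0S⟩ ⟨x, hx⟩) with hCdef
  have hCsub : C ⊆ A := Finset.filter_subset _ _
  have ha0C : a0 ∈ C := Finset.mem_filter.mpr ⟨ha0, ha0S, SimpleGraph.Reachable.refl _⟩
  have hCclosed : ∀ x ∈ C, ∀ y ∈ A, J.Adj x y → y ∈ C := by
    intro x hxC y hyA hadj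
    obtain ⟨hxA, hx, hreach⟩ := Finset.mem_filter.mp hxC
    have hyS : y ∈ As := by rw [hAsdef]; exact Finset.mem_coe.mpr hyA
    refine Finset.mem_filter.mpr ⟨hyA, hyS, hreach.trans (SimpleGraph.Adj.reachable ?_)⟩
    show G'.Adj ⟨x, hx⟩ ⟨y, hyS⟩
    exact hadj
  have hCA : C = A := by
    by_contra hCAne
    obtain ⟨y1, hy1A, hy1C⟩ : ∃ y, y ∈ A ∧ y ∉ C := by
      by_contra hno
      push_neg at hno
      exact hCAne (Finset.Subset.antisymm hCsub (fun y hy => hno y hy))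
    set Y1 : Finset (Fin n) := W ∪ C with hY1def
    set Y2 : Finset (Fin n) := Z \ C with hY2def
    have hCZ : C ⊆ Z := fun x hx => hAZ (hCsub hx)
    have hWY1 : W ⊆ Y1 := Finset.subset_union_left
    have hY1Z : Y1 ⊆ Z := Finset.union_subset hWsubZ hCZ
    have hWY2 : W ⊆ Y2 := by
      intro w hw
      exact Finset.mem_sdiff.mpr ⟨hWsubZ hw, fun hwC => hAnW w (hCsub hwC) hw⟩
    have hY2Z : Y2 ⊆ Z := Finset.sdiff_subset
    have hWY1s : W ⊂ Y1 :=
      ⟨hWY1, fun hsub => hAnW a0 ha0 (hsub (Finset.mem_union_right _ ha0C))⟩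
    have hY1Zs : Y1 ⊂ Z := by
      refine ⟨hY1Z, fun hsub => ?_⟩
      rcases Finset.mem_union.mp (hsub (hAZ hy1A)) with h | h
      · exact hAnW y1 hy1A h
      · exact hy1C h
    have hWY2s : W ⊂ Y2 :=
      ⟨hWY2, fun hsub => hAnW y1 hy1A
        (hsub (Finset.mem_sdiff.mpr ⟨hAZ hy1A, hy1C⟩))⟩
    have hY2Zs : Y2 ⊂ Z :=
      ⟨hY2Z, fun hsub => (Finset.mem_sdiff.mp (hsub (hCZ ha0C))).2 ha0C⟩
    have hZY1 : Z \ Y1 = A \ C := by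
      ext x
      simp only [hY1def, Finset.mem_sdiff, Finset.mem_union, hAdef]
      tauto
    have hZY2 : Z \ Y2 = C := by
      ext x
      simp only [hY2def, Finset.mem_sdiff]
      constructor
      · rintro ⟨h1, h2⟩
        by_contra h3
        exact h2 ⟨h1, h3⟩
      · intro h
        exact ⟨hCZ h, fun h2 => h2.2 h⟩
    have hbothA' : ∀ e ∈ rootedEdges J W Z, ∀ x ∈ e, x ∈ A := by
      intro e he
      rw [hroot] at he
      exact hbothA e ((hmemEF e).mpr he)
    have hedgesplit : ∀ e ∈ rootedEdges J W Z,
        (∀ x ∈ e, x ∈ C) ∨ (∀ x ∈ e, x ∈ A ∧ x ∉ C) := by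
      intro e he
      induction e using Sym2.ind with
      | _ u v =>
        have hu : u ∈ A := hbothA' _ he u (by simp)
        have hv : v ∈ A := hbothA' _ he v (by simp)
        have hadj : J.Adj u v := J.mem_edgeSet.mp he.1
        by_cases huC : u ∈ C
        · left
          have hvC : v ∈ C := hCclosed u huC v hv hadj
          intro x hx
          rw [Sym2.mem_iff] at hx
          rcases hx with rfl | rfl
          · exact huC
          · exact hvC
        · right
          have hvC : v ∉ C := fun hvC => huC (hCclosed v hvC u hu hadj.symm)
          intro x hx
          rw [Sym2.mem_iff] at hx
          rcases hx with rfl | rfl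
          · exact ⟨hu, huC⟩
          · exact ⟨hv, hvC⟩
    have hsplitset : rootedEdges J W Z = rootedEdges J Y1 Z ∪ rootedEdges J Y2 Z := by
      ext e
      constructor
      · intro he
        have hx0 : e.out.1 ∈ e := Sym2.out_fst_mem e
        rcases hedgesplit e he with hC | hNC
        · right
          refine ⟨he.1, he.2.1, fun hall => ?_⟩
          exact (Finset.mem_sdiff.mp (hall e.out.1 hx0)).2 (hC e.out.1 hx0)
        · left
          refine ⟨he.1, he.2.1, fun hall => ?_⟩
          rcases Finset.mem_union.mp (hall e.out.1 hx0) with h | h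
          · exact hAnW e.out.1 (hNC e.out.1 hx0).1 h
          · exact (hNC e.out.1 hx0).2 h
      · rintro (h | h)
        · exact rooted_anti J W Y1 Z hWY1 h
        · exact rooted_anti J W Y2 Z hWY2 h
    have hdisj : Disjoint (rootedEdges J Y1 Z) (rootedEdges J Y2 Z) := by
      rw [Set.disjoint_left]
      rintro e h1 h2
      have heW : e ∈ rootedEdges J W Z := rooted_anti J W Y1 Z hWY1 h1
      rcases hedgesplit e heW with hC | hNC
      · exact h1.2.2 (fun x hx => Finset.mem_union_right _ (hC x hx))
      · exact h2.2.2 (fun x hx =>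
          Finset.mem_sdiff.mpr ⟨heW.2.1 x hx, (hNC x hx).2⟩)
    have hesum : eWZ J W Z = eWZ J Y1 Z + eWZ J Y2 Z := by
      rw [eWZ, hsplitset, natCard_set_union hdisj]
      rfl
    have hcsum : (Z \ Y1).card + (Z \ Y2).card = A.card := by
      rw [hZY1, hZY2, Finset.card_sdiff_of_subset hCsub]
      have := Finset.card_le_card hCsub
      omega
    have hautle := autWZ_mul_le J W Z Y1 Y2 hWY1 hY1Z hWY2 hY2Z (fun v hv => by
      by_cases hvC : v ∈ C
      · exact Or.inl (Finset.mem_union_right _ hvC)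
      · exact Or.inr (Finset.mem_sdiff.mpr ⟨hv, hvC⟩))
    have hlt1 := hlead Y1 hWY1s hY1Zs
    have hlt2 := hlead Y2 hWY2s hY2Zs
    simp only [mu] at hlt1 hlt2 hmu
    have hpos1 : (0:ℝ) < autWZ J Y1 Z := by exact_mod_cast autWZ_pos_s6 J Y1 Z
    have hpos2 : (0:ℝ) < autWZ J Y2 Z := by exact_mod_cast autWZ_pos_s6 J Y2 Z
    have hposW : (0:ℝ) < autWZ J W Z := by exact_mod_cast autWZ_pos_s6 J W Z
    have hWle : (autWZ J W Z : ℝ) ≤ (n:ℝ) ^ (Z \ W).card * p ^ (eWZ J W Z) :=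
      (one_le_div hposW).mp hmu
    have h1' : (n:ℝ) ^ (Z \ Y1).card * p ^ (eWZ J Y1 Z) < autWZ J Y1 Z :=
      (div_lt_one hpos1).mp hlt1
    have h2' : (n:ℝ) ^ (Z \ Y2).card * p ^ (eWZ J Y2 Z) < autWZ J Y2 Z :=
      (div_lt_one hpos2).mp hlt2
    have hprod : (n:ℝ) ^ (Z \ W).card * p ^ (eWZ J W Z)
        = ((n:ℝ) ^ (Z \ Y1).card * p ^ (eWZ J Y1 Z)) *
          ((n:ℝ) ^ (Z \ Y2).card * p ^ (eWZ J Y2 Z)) := by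
      have hcA : (Z \ W).card = (Z \ Y1).card + (Z \ Y2).card := by
        rw [hcsum, hAdef]
      rw [hcA, hesum, pow_add, pow_add]
      ring
    have hmul : ((n:ℝ) ^ (Z \ Y1).card * p ^ (eWZ J Y1 Z)) *
        ((n:ℝ) ^ (Z \ Y2).card * p ^ (eWZ J Y2 Z))
        < (autWZ J Y1 Z : ℝ) * (autWZ J Y2 Z : ℝ) :=
      mul_lt_mul'' h1' h2' (by positivity) (by positivity)
    have hcast : (autWZ J Y1 Z : ℝ) * (autWZ J Y2 Z : ℝ) ≤ (autWZ J W Z : ℝ) := by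
      exact_mod_cast hautle
    linarith [hWle, hprod ▸ hWle]
  -- connectivity
  have hreachall : ∀ x : As, G'.Reachable ⟨a0, ha0S⟩ x := by
    intro x
    have hxA : x.1 ∈ A := Finset.mem_coe.mp (by rw [← hAsdef]; exact x.2)
    have hxC : x.1 ∈ C := by rw [hCA]; exact hxA
    obtain ⟨_, hx', hr⟩ := Finset.mem_filter.mp hxC
    have hxx : x = ⟨x.1, hx'⟩ := Subtype.ext rfl
    rw [hxx]
    exact hr
  have hconn : G'.Connected := by
    rw [SimpleGraph.connected_iff]
    refine ⟨fun x y => (hreachall x).symm.trans (hreachall y), ⟨⟨a0, ha0S⟩⟩⟩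
  -- degrees in the induced graph
  have hdeg : ∀ v : As, G'.degree v = 2 := by
    intro v
    have hvA : v.1 ∈ A := Finset.mem_coe.mp (by rw [← hAsdef]; exact v.2)
    rw [← hdA v.1 hvA, ← SimpleGraph.card_neighborFinset_eq_degree]
    apply Finset.card_bij (fun (w : As) _ => w.1)
    · intro w hw
      rw [SimpleGraph.mem_neighborFinset] at hw
      have hadj : G'.Adj v w := hw
      refine Finset.mem_filter.mpr ⟨Finset.mem_coe.mp (by rw [← hAsdef]; exact w.2), hadj⟩
    · intro w1 _ w2 _ h
      exact Subtype.ext h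
    · intro y hy
      obtain ⟨hyA, hyadj⟩ := Finset.mem_filter.mp hy
      have hyS : y ∈ As := by rw [hAsdef]; exact Finset.mem_coe.mpr hyA
      refine ⟨⟨y, hyS⟩, ?_, rfl⟩
      rw [SimpleGraph.mem_neighborFinset]
      show G'.Adj v ⟨y, hyS⟩
      exact hyadj
  have hcardAs : Fintype.card As = A.card := by
    have h1 : Fintype.card As = Fintype.card {x // x ∈ A} :=
      Fintype.card_congr (Equiv.subtypeEquivRight (fun x => by
        rw [hAsdef]; exact Finset.mem_coe))
    rw [h1, Fintype.card_coe]
  obtain ⟨iso⟩ := iso_cycle G' hconn hdeg (by rw [hcardAs]; omega)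
  rw [hcardAs] at iso
  exact hnot ⟨hBempty, ⟨iso⟩⟩
end

section
/- Let H be a graph on n vertices, p' ∈ [0,1], and p = e² p'. If N(H,F) ≤ E_{p'} X_F for every connected graph F, then N(H,F) ≤ E_p X_F for every graph F without isolated vertices. -/
open SimpleGraph

/-! ### Finiteness instances -/

instance subgraphFinite {V : Type} [Finite V] (G : SimpleGraph V) : Finite G.Subgraph := by
  classical
  have : Function.Injective (fun H' : G.Subgraph => (H'.verts, H'.Adj)) := by
    intro a b h
    simp only [Prod.mk.injEq] at h
    exact SimpleGraph.Subgraph.ext h.1 h.2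
  exact Finite.of_injective _ this

instance isoFinite {V W : Type} [Finite V] [Finite W] (G : SimpleGraph V) (G' : SimpleGraph W) :
    Finite (G ≃g G') := by
  have : Function.Injective (fun e : G ≃g G' => e.toEquiv) := by
    intro a b h
    ext v
    exact congrArg (fun e => e v) h
  exact Finite.of_injective _ this

/-! ### Small card lemmas -/

lemma nat_card_sigma {ι : Type} [Fintype ι] (f : ι → Type) [∀ i, Finite (f i)] :
    Nat.card (Σ i, f i) = ∑ i, Nat.card (f i) := by
  letI : ∀ i, Fintype (f i) := fun i => Fintype.ofFinite _
  rw [Nat.card_eq_fintype_card, Fintype.card_sigma]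
  exact Finset.sum_congr rfl (fun i _ => (Nat.card_eq_fintype_card).symm)

/-- Composing with a fixed iso gives an equivalence of iso types. -/
def isoCongr {V W X : Type} {G : SimpleGraph V} {G' : SimpleGraph W} {G'' : SimpleGraph X}
    (e0 : G' ≃g G'') : (G ≃g G') ≃ (G ≃g G'') where
  toFun e := e.trans e0
  invFun e := e.trans e0.symm
  left_inv e := by ext v; exact e0.symm_apply_apply _
  right_inv e := by ext v; exact e0.apply_symm_apply _

lemma card_sigma_iso {α β : Type} [Finite α] [Finite β] (H : SimpleGraph α) (F : SimpleGraph β) :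
    Nat.card (Σ H' : H.Subgraph, (F ≃g H'.coe)) = _root_.copyCount H F * Nat.card (F ≃g F) := by
  classical
  have hcard : ∀ H' : H.Subgraph, Nat.card (F ≃g H'.coe) =
      if Nonempty (F ≃g H'.coe) then Nat.card (F ≃g F) else 0 := by
    intro H'
    by_cases h : Nonempty (F ≃g H'.coe)
    · rw [if_pos h]
      obtain ⟨e0⟩ := h
      exact Nat.card_congr (isoCongr e0.symm)
    · rw [if_neg h]
      rw [not_nonempty_iff] at h
      exact Nat.card_of_isEmpty
  letI : Fintype H.Subgraph := Fintype.ofFinite _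
  letI : ∀ H' : H.Subgraph, Fintype (F ≃g H'.coe) := fun H' => Fintype.ofFinite _
  rw [Nat.card_eq_fintype_card, Fintype.card_sigma]
  have : ∀ H' : H.Subgraph, Fintype.card (F ≃g H'.coe) =
      if Nonempty (F ≃g H'.coe) then Nat.card (F ≃g F) else 0 := by
    intro H'; rw [← Nat.card_eq_fintype_card]; exact hcard H'
  rw [Finset.sum_congr rfl (fun H' _ => this H')]
  rw [← Finset.sum_filter, Finset.sum_const, smul_eq_mul]
  congr 1
  rw [_root_.copyCount, Nat.card_eq_fintype_card, Fintype.card_subtype]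

lemma copyCount_eq_zero {n : ℕ} (H : SimpleGraph (Fin n)) {β : Type} [Fintype β]
    (F : SimpleGraph β) (h : n < Fintype.card β) : _root_.copyCount H F = 0 := by
  rw [_root_.copyCount]
  have : IsEmpty {H' : H.Subgraph // Nonempty (F ≃g H'.coe)} := by
    constructor
    rintro ⟨H', ⟨e⟩⟩
    classical
    letI : Fintype H'.verts := Fintype.ofFinite _
    have : Fintype.card β ≤ n := by
      have h2 : Fintype.card H'.verts ≤ Fintype.card (Fin n) :=
        Fintype.card_le_of_injective _ Subtype.val_injective
      rw [Fintype.card_fin] at h2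
      exact (Fintype.card_congr e.toEquiv).le.trans h2
    omega
  exact Nat.card_of_isEmpty

lemma aut_pos {β : Type} [Finite β] (F : SimpleGraph β) : 0 < Nat.card (F ≃g F) := by
  have : Nonempty (F ≃g F) := ⟨Iso.refl⟩
  exact Nat.card_pos

/-! ### The arithmetic inequality `n^v ≤ e^v (n)_v` -/

lemma pow_le_exp_mul_descFactorial : ∀ (v n : ℕ), v ≤ n →
    (n : ℝ) ^ v ≤ Real.exp v * n.descFactorial v := by
  intro v
  induction v with
  | zero => intro n _; simp
  | succ v ih =>
    intro n hn
    obtain ⟨m, rfl⟩ : ∃ m, n = m + 1 := ⟨n - 1, by omega⟩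
    have hvm : v ≤ m := by omega
    have h1 : (m + 1 : ℝ) ^ v ≤ Real.exp 1 * (m : ℝ) ^ v := by
      rcases Nat.eq_zero_or_pos v with hv | hv
      · subst hv
        simpa using Real.one_le_exp (by norm_num : (0:ℝ) ≤ 1)
      · have hm : (0:ℝ) < m := by
          have : 1 ≤ m := by omega
          exact_mod_cast this
        have h2 : (m + 1 : ℝ) ≤ m * Real.exp (1 / m : ℝ) := by
          calc (m + 1 : ℝ) = m * (1 + 1/m) := by field_simp
          _ ≤ m * Real.exp (1/m : ℝ) := by
              apply mul_le_mul_of_nonneg_left _ hm.le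
              linarith [Real.add_one_le_exp (1 / m : ℝ)]
        calc (m + 1 : ℝ) ^ v ≤ (m * Real.exp (1/m : ℝ)) ^ v := by
              apply pow_le_pow_left₀ (by positivity) h2
        _ = (m:ℝ)^v * Real.exp (v/m : ℝ) := by
              rw [mul_pow, ← Real.exp_nat_mul]; ring_nf
        _ ≤ (m:ℝ)^v * Real.exp 1 := by
              apply mul_le_mul_of_nonneg_left _ (by positivity)
              apply Real.exp_le_exp.2
              rw [div_le_one hm]
              exact_mod_cast hvm
        _ = Real.exp 1 * (m:ℝ)^v := by ring
    have ih' := ih m hvm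
    rw [Nat.succ_descFactorial_succ]
    push_cast
    have hstep : (m+1:ℝ)^(v+1) ≤ (m+1:ℝ) * (Real.exp 1 * (m:ℝ)^v) := by
      rw [pow_succ]
      have h0 : (0:ℝ) ≤ m + 1 := by positivity
      calc (m+1:ℝ)^v * (m+1:ℝ) = (m+1:ℝ) * (m+1:ℝ)^v := by ring
      _ ≤ (m+1:ℝ) * (Real.exp 1 * (m:ℝ)^v) := mul_le_mul_of_nonneg_left h1 h0
    calc ((m:ℝ)+1)^(v+1) ≤ (m+1:ℝ) * (Real.exp 1 * (m:ℝ)^v) := hstep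
    _ ≤ (m+1:ℝ) * (Real.exp 1 * (Real.exp v * m.descFactorial v)) := by
        apply mul_le_mul_of_nonneg_left _ (by positivity)
        exact mul_le_mul_of_nonneg_left ih' (by positivity)
    _ = Real.exp (v+1) * ((m+1:ℝ) * m.descFactorial v) := by
        rw [Real.exp_add]; ring

/-! ### Components -/

lemma connected_induce_supp {β : Type} (F : SimpleGraph β) (c : F.ConnectedComponent) :
    (F.induce c.supp).Connected := by
  obtain ⟨u, hu⟩ := c.exists_rep
  classical
  apply F.induce_connected_of_patches u
    (by simp only [ConnectedComponent.mem_supp_iff, ← hu]; rfl)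
  intro v hv
  simp only [ConnectedComponent.mem_supp_iff] at hv
  have hreach : F.Reachable u v := by
    rw [← ConnectedComponent.eq]
    exact hu.trans hv.symm
  obtain ⟨p⟩ := hreach
  refine ⟨{x | x ∈ p.support}, ?_, p.start_mem_support, p.end_mem_support, ?_⟩
  · intro x hx
    simp only [Set.mem_setOf_eq] at hx
    simp only [ConnectedComponent.mem_supp_iff, ← hu]
    exact ConnectedComponent.sound ((p.takeUntil x hx).reverse.reachable)
  · exact ((p.connected_induce_support).preconnected) _ _

lemma card_le_two_mul_edges {β : Type} [Fintype β] (F : SimpleGraph β)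
    (h : ∀ v, ∃ w, F.Adj v w) : Fintype.card β ≤ 2 * Nat.card F.edgeSet := by
  classical
  have h1 : ∀ v, 1 ≤ F.degree v := by
    intro v
    obtain ⟨w, hw⟩ := h v
    rw [← F.mem_neighborFinset] at hw
    calc 1 ≤ (F.neighborFinset v).card := Finset.card_pos.2 ⟨w, hw⟩
    _ = F.degree v := rfl
  calc Fintype.card β = ∑ _v : β, 1 := by simp
  _ ≤ ∑ v, F.degree v := Finset.sum_le_sum (fun v _ => h1 v)
  _ = 2 * F.edgeFinset.card := F.sum_degrees_eq_twice_card_edges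
  _ = 2 * Nat.card F.edgeSet := by
      rw [Nat.card_eq_fintype_card, edgeFinset_card]

lemma sum_supp_eq {β : Type} [Fintype β] (F : SimpleGraph β)
    [Fintype F.ConnectedComponent] :
    ∑ c : F.ConnectedComponent, Nat.card c.supp = Fintype.card β := by
  rw [← nat_card_sigma]
  rw [← Nat.card_eq_fintype_card (α := β)]
  apply Nat.card_eq_of_bijective (fun x : Σ c : F.ConnectedComponent, c.supp => (x.2 : β))
  constructor
  · rintro ⟨c, u, hu⟩ ⟨d, v, hv⟩ h
    simp only at h
    subst h
    simp only [ConnectedComponent.mem_supp_iff] at hu hv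
    obtain rfl := hu.symm.trans hv
    rfl
  · intro v
    exact ⟨⟨F.connectedComponentMk v, v, rfl⟩, rfl⟩

lemma edges_le_sum {β : Type} [Fintype β] (F : SimpleGraph β)
    [Fintype F.ConnectedComponent] :
    Nat.card F.edgeSet ≤
      ∑ c : F.ConnectedComponent, Nat.card (F.induce c.supp).edgeSet := by
  rw [← nat_card_sigma]
  apply Nat.card_le_card_of_surjective
    (f := fun x : Σ c : F.ConnectedComponent, (F.induce c.supp).edgeSet =>
      (⟨Sym2.map Subtype.val x.2.val, by
        obtain ⟨c, e, he⟩ := x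
        induction e with
        | _ u v => exact he⟩ : F.edgeSet))
  rintro ⟨e, he⟩
  induction e with
  | _ u v =>
    rw [mem_edgeSet] at he
    have hc : F.connectedComponentMk v = F.connectedComponentMk u :=
      ConnectedComponent.sound he.symm.reachable
    refine ⟨⟨F.connectedComponentMk u,
      s(⟨u, rfl⟩, ⟨v, hc⟩), ?_⟩, ?_⟩
    · rw [mem_edgeSet]; exact he
    · simp

/-! ### The image subgraph construction and the key injection -/

section img
variable {n : ℕ} {H : SimpleGraph (Fin n)} {β : Type} {F : SimpleGraph β}

/-- The image of an induced piece of `F` under a copy of `F` in `H`, as a subgraph of `H`. -/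
def imgSubgraph (H' : H.Subgraph) (φ : F ≃g H'.coe) (s : Set β) : H.Subgraph where
  verts := (fun v => (φ v : Fin n)) '' s
  Adj a b := ∃ u ∈ s, ∃ w ∈ s, F.Adj u w ∧ (φ u : Fin n) = a ∧ (φ w : Fin n) = b
  adj_sub := by
    rintro a b ⟨u, hu, w, hw, hadj, rfl, rfl⟩
    exact H'.adj_sub (φ.map_adj_iff.mpr hadj)
  edge_vert := by
    rintro a b ⟨u, hu, w, hw, hadj, rfl, rfl⟩
    exact ⟨u, hu, rfl⟩
  symm := by
    constructor
    rintro a b ⟨u, hu, w, hw, hadj, rfl, rfl⟩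
    exact ⟨w, hw, u, hu, hadj.symm, rfl, rfl⟩

lemma phi_inj (H' : H.Subgraph) (φ : F ≃g H'.coe) :
    Function.Injective (fun v : β => (φ v : Fin n)) :=
  Subtype.val_injective.comp (Equiv.injective φ.toEquiv)

/-- The natural isomorphism from the induced graph to the image subgraph. -/
noncomputable def imgIso (H' : H.Subgraph) (φ : F ≃g H'.coe) (s : Set β) :
    (F.induce s) ≃g (imgSubgraph H' φ s).coe where
  toEquiv := Equiv.Set.imageOfInjOn (fun v : β => (φ v : Fin n)) s
    ((phi_inj H' φ).injOn)
  map_rel_iff' := by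
    rintro ⟨u, hu⟩ ⟨w, hw⟩
    simp only [Equiv.Set.imageOfInjOn, Equiv.coe_fn_mk]
    constructor
    · rintro ⟨u', hu', w', hw', hadj, h1, h2⟩
      obtain rfl := phi_inj H' φ h1
      obtain rfl := phi_inj H' φ h2
      exact hadj
    · intro hadj
      exact ⟨u, hu, w, hw, hadj, rfl, rfl⟩

lemma range_phi (H' : H.Subgraph) (φ : F ≃g H'.coe) :
    Set.range (fun v : β => (φ v : Fin n)) = H'.verts := by
  ext x
  constructor
  · rintro ⟨v, rfl⟩; exact (φ v).2
  · intro hx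
    exact ⟨φ.symm ⟨x, hx⟩, congrArg Subtype.val (φ.apply_symm_apply ⟨x, hx⟩)⟩

lemma adj_iff_phi (H' : H.Subgraph) (φ : F ≃g H'.coe) (a b : Fin n) :
    H'.Adj a b ↔ ∃ u w, F.Adj u w ∧ (φ u : Fin n) = a ∧ (φ w : Fin n) = b := by
  constructor
  · intro h
    have ha : a ∈ H'.verts := H'.edge_vert h
    have hb : b ∈ H'.verts := H'.edge_vert h.symm
    refine ⟨φ.symm ⟨a, ha⟩, φ.symm ⟨b, hb⟩, ?_, ?_, ?_⟩
    · rw [← φ.map_adj_iff]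
      rw [φ.apply_symm_apply, φ.apply_symm_apply]
      exact h
    · exact congrArg Subtype.val (φ.apply_symm_apply ⟨a, ha⟩)
    · exact congrArg Subtype.val (φ.apply_symm_apply ⟨b, hb⟩)
  · rintro ⟨u, w, hadj, rfl, rfl⟩
    exact φ.map_adj_iff.mpr hadj

/-- The key injection from copies of `F` to families of copies of its components. -/
lemma key_injection :
    Function.Injective (fun (x : Σ H' : H.Subgraph, (F ≃g H'.coe))
      (c : F.ConnectedComponent) =>
        (⟨imgSubgraph x.1 x.2 c.supp, imgIso x.1 x.2 c.supp⟩ :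
          Σ K : H.Subgraph, ((F.induce c.supp) ≃g K.coe))) := by
  rintro ⟨H1, φ1⟩ ⟨H2, φ2⟩ h
  have hf : ∀ v : β, (φ1 v : Fin n) = (φ2 v : Fin n) := by
    intro v
    have hc := congrFun h (F.connectedComponentMk v)
    simp only at hc
    have hv : v ∈ (F.connectedComponentMk v).supp := rfl
    exact congrArg (fun (y : Σ K : H.Subgraph,
      ((F.induce (F.connectedComponentMk v).supp) ≃g K.coe)) =>
        ((y.2 ⟨v, hv⟩ : y.1.verts) : Fin n)) hc
  have hH : H1 = H2 := by
    apply SimpleGraph.Subgraph.ext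
    · rw [← range_phi H1 φ1, ← range_phi H2 φ2]
      ext x
      simp only [Set.mem_range]
      exact ⟨fun ⟨v, hv⟩ => ⟨v, (hf v) ▸ hv⟩, fun ⟨v, hv⟩ => ⟨v, (hf v) ▸ hv⟩⟩
    · ext a b
      rw [adj_iff_phi H1 φ1, adj_iff_phi H2 φ2]
      constructor
      · rintro ⟨u, w, hadj, rfl, rfl⟩; exact ⟨u, w, hadj, (hf u).symm, (hf w).symm⟩
      · rintro ⟨u, w, hadj, rfl, rfl⟩; exact ⟨u, w, hadj, hf u, hf w⟩
  subst hH
  have hφ : φ1 = φ2 := by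
    ext v
    exact congrArg Fin.val (hf v)
  rw [hφ]

end img

/-- Claim 2.5: if `N(H,F) ≤ E_{p'} X_F` for every connected `F`, then with `p = e² p'`,
`N(H,F) ≤ E_p X_F` for every `F` without isolated vertices. -/
theorem connected_to_isolate_free {n : ℕ} (H : SimpleGraph (Fin n)) (p' : ℝ)
    (hp0 : 0 ≤ p') (hp1 : p' ≤ 1)
    (hyp : ∀ {β : Type} [Fintype β] (F : SimpleGraph β), F.Connected →
      (_root_.copyCount H F : ℝ) ≤ expCount n p' F) :
    ∀ {β : Type} [Fintype β] (F : SimpleGraph β), (∀ v, ∃ w, F.Adj v w) →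
      (_root_.copyCount H F : ℝ) ≤ expCount n (Real.exp 2 * p') F := by
  intro β _ F hisol
  by_cases hbig : n < Fintype.card β
  · rw [copyCount_eq_zero H F hbig]
    rw [expCount]
    push_cast
    apply div_nonneg
    · apply mul_nonneg (by positivity)
      apply pow_nonneg
      positivity
    · positivity
  · push_neg at hbig
    classical
    letI : Fintype F.ConnectedComponent := Fintype.ofFinite _
    letI : ∀ c : F.ConnectedComponent, Fintype c.supp := fun _ => Fintype.ofFinite _
    set v := Fintype.card β with hv
    set eF := Nat.card F.edgeSet with heF
    -- nat chain
    have h1 : _root_.copyCount H F * Nat.card (F ≃g F) ≤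
        ∏ c : F.ConnectedComponent,
          (_root_.copyCount H (F.induce c.supp) * Nat.card ((F.induce c.supp) ≃g (F.induce c.supp))) := by
      rw [← card_sigma_iso H F]
      have h2 := Nat.card_le_card_of_injective _ (key_injection (H := H) (F := F))
      rw [Nat.card_pi] at h2
      refine h2.trans (le_of_eq ?_)
      exact Finset.prod_congr rfl (fun c _ => card_sigma_iso H (F.induce c.supp))
    -- per-component real bound
    have h3 : ∀ c : F.ConnectedComponent,
        (_root_.copyCount H (F.induce c.supp) : ℝ) *
          (Nat.card ((F.induce c.supp) ≃g (F.induce c.supp)) : ℝ) ≤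
        (n.descFactorial (Nat.card c.supp)) * p' ^ (Nat.card (F.induce c.supp).edgeSet) := by
      intro c
      have hcon := connected_induce_supp F c
      have hh := hyp (F.induce c.supp) hcon
      have hpos : (0:ℝ) < Nat.card ((F.induce c.supp) ≃g (F.induce c.supp)) := by
        exact_mod_cast aut_pos _
      rw [expCount, le_div_iff₀ hpos] at hh
      rw [Nat.card_eq_fintype_card (α := c.supp)]
      exact hh
    -- combine nat chain with per-component bounds
    have hApos : (0:ℝ) < Nat.card (F ≃g F) := by exact_mod_cast aut_pos F
    have h4 : (_root_.copyCount H F : ℝ) * (Nat.card (F ≃g F) : ℝ) ≤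
        ∏ c : F.ConnectedComponent,
          ((n.descFactorial (Nat.card c.supp)) * p' ^ (Nat.card (F.induce c.supp).edgeSet)) := by
      have := h1
      calc (_root_.copyCount H F : ℝ) * (Nat.card (F ≃g F) : ℝ)
          = ((_root_.copyCount H F * Nat.card (F ≃g F) : ℕ) : ℝ) := by push_cast; ring
      _ ≤ ((∏ c : F.ConnectedComponent, (_root_.copyCount H (F.induce c.supp) *
            Nat.card ((F.induce c.supp) ≃g (F.induce c.supp))) : ℕ) : ℝ) := by
            exact_mod_cast h1
      _ = ∏ c : F.ConnectedComponent, ((_root_.copyCount H (F.induce c.supp) : ℝ) *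
            (Nat.card ((F.induce c.supp) ≃g (F.induce c.supp)) : ℝ)) := by push_cast; ring
      _ ≤ ∏ c : F.ConnectedComponent,
            ((n.descFactorial (Nat.card c.supp)) * p' ^ (Nat.card (F.induce c.supp).edgeSet)) := by
            apply Finset.prod_le_prod
            · intro c _; positivity
            · intro c _; exact h3 c
    -- simplify the product
    have h5 : ∏ c : F.ConnectedComponent,
        ((n.descFactorial (Nat.card c.supp) : ℝ) * p' ^ (Nat.card (F.induce c.supp).edgeSet)) =
        (∏ c : F.ConnectedComponent, (n.descFactorial (Nat.card c.supp) : ℝ)) *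
        p' ^ (∑ c : F.ConnectedComponent, Nat.card (F.induce c.supp).edgeSet) := by
      rw [Finset.prod_mul_distrib, Finset.prod_pow_eq_pow_sum]
    have h6 : (∏ c : F.ConnectedComponent, (n.descFactorial (Nat.card c.supp) : ℝ)) ≤
        (n : ℝ) ^ v := by
      calc (∏ c : F.ConnectedComponent, (n.descFactorial (Nat.card c.supp) : ℝ))
          ≤ ∏ c : F.ConnectedComponent, (n : ℝ) ^ (Nat.card c.supp) := by
            apply Finset.prod_le_prod
            · intro c _; positivity
            · intro c _; exact_mod_cast Nat.descFactorial_le_pow n (Nat.card c.supp)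
      _ = (n : ℝ) ^ (∑ c : F.ConnectedComponent, Nat.card c.supp) := by
            rw [Finset.prod_pow_eq_pow_sum]
      _ = (n : ℝ) ^ v := by rw [sum_supp_eq F]
    have h7 : p' ^ (∑ c : F.ConnectedComponent, Nat.card (F.induce c.supp).edgeSet) ≤
        p' ^ eF :=
      pow_le_pow_of_le_one hp0 hp1 (edges_le_sum F)
    have h8 : (n:ℝ) ^ v ≤ Real.exp v * (n.descFactorial v) :=
      pow_le_exp_mul_descFactorial v n hbig
    have hv2e : v ≤ 2 * eF := card_le_two_mul_edges F hisol
    have h9 : Real.exp v ≤ Real.exp 2 ^ eF := by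
      rw [← Real.exp_nat_mul]
      apply Real.exp_le_exp.2
      push_cast
      have : (v : ℝ) ≤ 2 * eF := by exact_mod_cast hv2e
      linarith
    -- final assembly
    rw [expCount, le_div_iff₀ hApos]
    calc (_root_.copyCount H F : ℝ) * (Nat.card (F ≃g F) : ℝ)
        ≤ (∏ c : F.ConnectedComponent, (n.descFactorial (Nat.card c.supp) : ℝ)) *
          p' ^ (∑ c : F.ConnectedComponent, Nat.card (F.induce c.supp).edgeSet) := by
          rw [← h5]; exact h4
    _ ≤ (n : ℝ) ^ v * p' ^ eF := by
          apply mul_le_mul h6 h7 (by positivity) (by positivity)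
    _ ≤ (Real.exp v * (n.descFactorial v)) * p' ^ eF := by
          apply mul_le_mul_of_nonneg_right h8 (by positivity)
    _ ≤ (Real.exp 2 ^ eF * (n.descFactorial v)) * p' ^ eF := by
          apply mul_le_mul_of_nonneg_right _ (by positivity)
          exact mul_le_mul_of_nonneg_right h9 (by positivity)
    _ = (n.descFactorial (Fintype.card β)) * (Real.exp 2 * p') ^ (Nat.card F.edgeSet) := by
          rw [mul_pow, ← hv, ← heF]; ring
end

section
/- If G is a graph with no isolated vertices all of whose components are isomorphic to a single tree, then aut(G) ≤ v_G^{e_G}. -/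
open SimpleGraph

private lemma reach_mem_pair {V : Type} {G : SimpleGraph V} {v w : V}
    (hv : ∀ u, G.Adj v u → u = w) (hw : ∀ u, G.Adj w u → u = v) :
    ∀ x : V, G.Reachable v x → x = v ∨ x = w := by
  have key : ∀ (u x : V), G.Walk u x → (u = v ∨ u = w) → (x = v ∨ x = w) := by
    intro u x p
    induction p with
    | nil => exact id
    | cons h p ih =>
      rintro (rfl | rfl)
      · exact ih (Or.inr (hv _ h))
      · exact ih (Or.inl (hw _ h))
  exact fun x hx => key v x hx.some (Or.inl rfl)

/-- If `G` has no isolated vertices and all its components are isomorphic to a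
single tree `T`, then `aut(G) ≤ v_G^{e_G}`. -/
theorem aut_le_v_pow_e_of_tree_components {V γ : Type} [Fintype V] [Fintype γ]
    (G : SimpleGraph V) (hiso : ∀ v, ∃ w, G.Adj v w)
    (T : SimpleGraph γ) (hT : T.IsTree)
    (hcomp : ∀ K : G.ConnectedComponent, Nonempty ((G.induce K.supp) ≃g T)) :
    Nat.card (G ≃g G) ≤ Fintype.card V ^ (Nat.card G.edgeSet) := by
  classical
  cases isEmpty_or_nonempty V with
  | inl hV =>
    haveI : IsEmpty (Sym2 V) := ⟨fun z => Sym2.ind (fun x _ => (hV.elim x : False)) z⟩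
    haveI : IsEmpty G.edgeSet := ⟨fun e => IsEmpty.elim ‹IsEmpty (Sym2 V)› e.1⟩
    have h1 : Nat.card (G ≃g G) = 1 := by
      rw [Nat.card_eq_one_iff_unique]
      exact ⟨⟨fun a b => DFunLike.ext a b fun v => hV.elim v⟩, ⟨Iso.refl⟩⟩
    rw [h1, Nat.card_of_isEmpty, pow_zero]
  | inr hne =>
    obtain ⟨v0⟩ := hne
    have fK : ∀ K : G.ConnectedComponent, (G.induce K.supp) ≃g T := fun K => (hcomp K).some
    have hsuppcard : ∀ K : G.ConnectedComponent, Nat.card K.supp = Fintype.card γ :=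
      fun K => by rw [Nat.card_congr (fK K).toEquiv, Nat.card_eq_fintype_card]
    -- t ≥ 2
    have ht2 : 2 ≤ Fintype.card γ := by
      obtain ⟨w0, hw0⟩ := hiso v0
      have h1 : v0 ∈ (G.connectedComponentMk v0).supp := rfl
      have h2 : w0 ∈ (G.connectedComponentMk v0).supp :=
        (ConnectedComponent.mem_supp_iff _ _).mpr
          (ConnectedComponent.connectedComponentMk_eq_of_adj hw0.symm)
      have hlt : 1 < (G.connectedComponentMk v0).supp.ncard :=
        (Set.one_lt_ncard (Set.toFinite _)).mpr ⟨v0, h1, w0, h2, hw0.ne⟩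
      rw [← Nat.card_coe_set_eq, hsuppcard] at hlt
      omega
    -- card V = c * t
    have hcardV : Fintype.card V = Nat.card G.ConnectedComponent * Fintype.card γ := by
      have e : V ≃ (G.ConnectedComponent × γ) :=
        ((Equiv.sigmaFiberEquiv G.connectedComponentMk).symm.trans
          (Equiv.sigmaCongrRight fun K => (fK K).toEquiv)).trans
          (Equiv.sigmaEquivProd _ γ)
      rw [← Nat.card_eq_fintype_card (α := V), Nat.card_congr e, Nat.card_prod,
        Nat.card_eq_fintype_card (α := γ)]
    -- membership facts for edge endpoints
    have hout : ∀ s : G.edgeSet, Sym2.mk (Quot.out s.1).1 (Quot.out s.1).2 = s.1 := fun s => Quot.out_eq s.1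
    have hadj : ∀ s : G.edgeSet, G.Adj (Quot.out s.1).1 (Quot.out s.1).2 := by
      intro s
      have h := s.2
      rw [← hout s] at h
      exact G.mem_edgeSet.mp h
    have hb : ∀ s : G.edgeSet,
        (Quot.out s.1).2 ∈ (G.connectedComponentMk (Quot.out s.1).1).supp := fun s =>
      (ConnectedComponent.mem_supp_iff _ _).mpr
        (ConnectedComponent.connectedComponentMk_eq_of_adj (hadj s).symm)
    -- the map from edges to (component, tree edge)
    have ha : ∀ s : G.edgeSet,
        (Quot.out s.1).1 ∈ (G.connectedComponentMk (Quot.out s.1).1).supp := fun s => rfl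
    let Φ : G.edgeSet → G.ConnectedComponent × T.edgeSet := fun s =>
      ⟨G.connectedComponentMk (Quot.out s.1).1,
        (fK (G.connectedComponentMk (Quot.out s.1).1)).mapEdgeSet
          ⟨s((⟨(Quot.out s.1).1, ha s⟩ : (G.connectedComponentMk (Quot.out s.1).1).supp),
            (⟨(Quot.out s.1).2, hb s⟩ : (G.connectedComponentMk (Quot.out s.1).1).supp)),
            (hadj s : _)⟩⟩
    let Ψ : G.ConnectedComponent × T.edgeSet → Sym2 V := fun p =>
      Sym2.map Subtype.val ((fK p.1).mapEdgeSet.symm p.2).1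
    have hΨΦ : ∀ s : G.edgeSet, Ψ (Φ s) = s.1 := by
      intro s
      show Sym2.map Subtype.val
        (((fK (G.connectedComponentMk (Quot.out s.1).1)).mapEdgeSet.symm
          ((fK (G.connectedComponentMk (Quot.out s.1).1)).mapEdgeSet _))).1 = s.1
      rw [Equiv.symm_apply_apply]
      rw [Sym2.map_pair_eq]
      exact Quot.out_eq s.1
    have hΦinj : Function.Injective Φ := fun s1 s2 h =>
      Subtype.ext (by rw [← hΨΦ s1, ← hΨΦ s2, h])
    -- tree edge count
    have hTedge : Nat.card T.edgeSet + 1 = Fintype.card γ := by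
      haveI : Fintype T.edgeSet := Fintype.ofFinite _
      rw [Nat.card_eq_fintype_card, ← SimpleGraph.edgeFinset_card]
      exact hT.card_edgeFinset
    have hEV : Nat.card G.edgeSet ≤ Fintype.card V := by
      have h1 : Nat.card G.edgeSet ≤ Nat.card (G.ConnectedComponent × T.edgeSet) :=
        Nat.card_le_card_of_injective Φ hΦinj
      rw [Nat.card_prod] at h1
      have h2 : Nat.card G.ConnectedComponent * Nat.card T.edgeSet ≤
          Nat.card G.ConnectedComponent * Fintype.card γ :=
        Nat.mul_le_mul_left _ (by omega)
      omega
    -- case split on the order of T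
    rcases Nat.lt_or_ge (Fintype.card γ) 3 with ht | ht3
    · -- t = 2 : G is a perfect matching
      have huniq : ∀ (v u1 u2 : V), G.Adj v u1 → G.Adj v u2 → u1 = u2 := by
        intro v u1 u2 h1 h2
        by_contra hne
        have hv : v ∈ (G.connectedComponentMk v).supp := rfl
        have hu1 : u1 ∈ (G.connectedComponentMk v).supp :=
          (ConnectedComponent.mem_supp_iff _ _).mpr
            (ConnectedComponent.connectedComponentMk_eq_of_adj h1.symm)
        have hu2 : u2 ∈ (G.connectedComponentMk v).supp :=
          (ConnectedComponent.mem_supp_iff _ _).mpr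
            (ConnectedComponent.connectedComponentMk_eq_of_adj h2.symm)
        have hlt : 2 < (G.connectedComponentMk v).supp.ncard :=
          (Set.two_lt_ncard (Set.toFinite _)).mpr
            ⟨v, hv, u1, hu1, u2, hu2, h1.ne, h2.ne, hne⟩
        rw [← Nat.card_coe_set_eq, hsuppcard] at hlt
        omega
      let F : (G ≃g G) → (G.edgeSet → V) := fun φ s => φ (Quot.out s.1).1
      have hFinj : Function.Injective F := by
        intro φ ψ h
        refine DFunLike.ext φ ψ fun x => ?_
        obtain ⟨w, hw⟩ := hiso x
        set s : G.edgeSet := ⟨s(x, w), G.mem_edgeSet.mpr hw⟩ with hs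
        have happ : φ (Quot.out s.1).1 = ψ (Quot.out s.1).1 := congrFun h s
        have hxw : s((Quot.out s.1).1, (Quot.out s.1).2) = s(x, w) := hout s
        rcases Sym2.eq_iff.mp hxw with ⟨h1, _⟩ | ⟨h1, h2⟩
        · rw [h1] at happ; exact happ
        · rw [h1] at happ
          have a1 : G.Adj (φ w) (φ x) := φ.map_adj_iff.mpr hw.symm
          have a2 : G.Adj (φ w) (ψ x) := happ ▸ ψ.map_adj_iff.mpr hw.symm
          exact huniq _ _ _ a1 a2
      calc Nat.card (G ≃g G) ≤ Nat.card (G.edgeSet → V) :=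
            Nat.card_le_card_of_injective F hFinj
        _ = Nat.card V ^ Nat.card G.edgeSet := Nat.card_fun
        _ = Fintype.card V ^ Nat.card G.edgeSet := by rw [Nat.card_eq_fintype_card]
    · -- t ≥ 3
      have hkey : ∀ v w, G.Adj v w → (∀ u, G.Adj v u → u = w) →
          ∃ u, G.Adj w u ∧ u ≠ v := by
        intro v w hvw hv
        by_contra hcon
        push_neg at hcon
        have hsub : (G.connectedComponentMk v).supp ⊆ {v, w} := by
          intro x hx
          have hr : G.Reachable v x :=
            (ConnectedComponent.exact ((ConnectedComponent.mem_supp_iff _ _).mp hx)).symm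
          rcases reach_mem_pair hv (fun u hu => hcon u hu) x hr with rfl | rfl <;> simp
        have hle : (G.connectedComponentMk v).supp.ncard ≤ 2 := by
          refine le_trans (Set.ncard_le_ncard hsub (Set.toFinite _)) ?_
          refine le_trans (Set.ncard_insert_le _ _) ?_
          rw [Set.ncard_singleton]
        have := hsuppcard (G.connectedComponentMk v)
        rw [Nat.card_coe_set_eq] at this
        omega
      have hfix : ∀ (φ : G ≃g G), (∀ s : G.edgeSet, Sym2.map φ s.1 = s.1) → ∀ v, φ v = v := by
        intro φ hφ v
        obtain ⟨w, hvw⟩ := hiso v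
        have hedge : ∀ a b : V, G.Adj a b → (φ a = a ∧ φ b = b) ∨ (φ a = b ∧ φ b = a) := by
          intro a b hab
          have h := hφ ⟨s(a, b), G.mem_edgeSet.mpr hab⟩
          rw [Sym2.map_pair_eq] at h
          exact Sym2.eq_iff.mp h
        rcases hedge v w hvw with ⟨h1, _⟩ | ⟨h1, h2⟩
        · exact h1
        by_cases hvu : ∀ u, G.Adj v u → u = w
        · obtain ⟨u, hwu, huv⟩ := hkey v w hvw hvu
          rcases hedge w u hwu with ⟨hw', _⟩ | ⟨hw', _⟩
          · exact absurd (h2.symm.trans hw') hvw.ne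
          · exact absurd (hw'.symm.trans h2) huv
        · push_neg at hvu
          obtain ⟨u, hvu', hune⟩ := hvu
          rcases hedge v u hvu' with ⟨h3, _⟩ | ⟨h3, _⟩
          · exact h3
          · exact absurd (h3.symm.trans h1) hune
      let F : (G ≃g G) → (G.edgeSet → G.edgeSet) := fun φ => φ.mapEdgeSet
      have hFinj : Function.Injective F := by
        intro φ ψ h
        have key : ∀ v, (φ.trans ψ.symm) v = v := by
          apply hfix
          intro s
          have h2 : Sym2.map φ s.1 = Sym2.map ψ s.1 :=
            congrArg Subtype.val (congrFun h s)
          have h3 : Sym2.map (⇑(φ.trans ψ.symm)) s.1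
              = Sym2.map (⇑ψ.symm) (Sym2.map (⇑φ) s.1) := by
            induction s.1 using Sym2.ind with
            | _ x y => simp [Sym2.map_pair_eq]
          rw [h3, h2]
          induction s.1 using Sym2.ind with
          | _ x y => simp [Sym2.map_pair_eq]
        refine DFunLike.ext φ ψ fun v => ?_
        have hv : ψ.symm (φ v) = v := key v
        have h4 := congrArg ψ hv
        rwa [RelIso.apply_symm_apply] at h4
      calc Nat.card (G ≃g G) ≤ Nat.card (G.edgeSet → G.edgeSet) :=
            Nat.card_le_card_of_injective F hFinj
        _ = Nat.card G.edgeSet ^ Nat.card G.edgeSet := Nat.card_fun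
        _ ≤ Fintype.card V ^ Nat.card G.edgeSet := Nat.pow_le_pow_left hEV _
end

section
/- Let H be a q-sparse graph on n vertices and T any tree. Then the maximum number ν(H,T) of vertex-disjoint copies of T in H satisfies ν(H,T) ≤ e · E_q X_T, where E_q X_T = (n)_{v_T} q^{v_T − 1}/aut(T). -/
open SimpleGraph

private lemma descFactorial_add_le (n a b : ℕ) :
    n.descFactorial (a + b) ≤ n.descFactorial a * n.descFactorial b := by
  induction b with
  | zero => simp
  | succ b ih =>
    rw [← Nat.add_assoc, Nat.descFactorial_succ, Nat.descFactorial_succ]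
    calc (n - (a+b)) * n.descFactorial (a+b) ≤ (n - b) * (n.descFactorial a * n.descFactorial b) :=
          Nat.mul_le_mul (Nat.sub_le_sub_left (Nat.le_add_left b a) n) ih
      _ = n.descFactorial a * ((n - b) * n.descFactorial b) := by ring

private lemma descFactorial_mul_le (n t ν : ℕ) :
    n.descFactorial (ν * t) ≤ (n.descFactorial t) ^ ν := by
  induction ν with
  | zero => simp
  | succ ν ih =>
    rw [Nat.succ_mul]
    calc n.descFactorial (ν * t + t) ≤ n.descFactorial (ν * t) * n.descFactorial t :=
          descFactorial_add_le n (ν * t) t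
      _ ≤ (n.descFactorial t) ^ ν * n.descFactorial t := Nat.mul_le_mul_right _ ih
      _ = (n.descFactorial t) ^ (ν + 1) := by rw [pow_succ]

private lemma pow_le_exp_mul_factorial (ν : ℕ) :
    ((ν : ℝ)) ^ ν ≤ Real.exp ν * ν.factorial := by
  have h := Real.sum_le_exp_of_nonneg (x := (ν : ℝ)) (Nat.cast_nonneg ν) (ν + 1)
  have h1 : (ν : ℝ) ^ ν / ν.factorial ≤ Real.exp ν := by
    refine le_trans ?_ h
    refine Finset.single_le_sum (f := fun i => (ν : ℝ) ^ i / i.factorial) ?_ ?_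
    · intro i _; positivity
    · simp
  have hfac : (0 : ℝ) < ν.factorial := by exact_mod_cast ν.factorial_pos
  calc ((ν : ℝ)) ^ ν = ((ν : ℝ) ^ ν / ν.factorial) * ν.factorial := by field_simp
    _ ≤ Real.exp ν * ν.factorial := by
        exact mul_le_mul_of_nonneg_right h1 hfac.le

/-- Claim 5.1: if `H` is `q`-sparse then the number of pairwise vertex-disjoint
copies of a tree `T` in `H` is at most `e · E_q X_T = e · (n)_{v_T} q^{v_T-1}/aut(T)`. -/
theorem vertex_disjoint_tree_copies_bound {n : ℕ} {q : ℝ} (hq0 : 0 ≤ q) (hq1 : q ≤ 1)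
    (H : SimpleGraph (Fin n)) (hH : ExpSparse n q H)
    {γ : Type} [Fintype γ] (T : SimpleGraph γ) (hT : T.IsTree)
    (ν : ℕ) (f : Fin ν → γ → Fin n)
    (hcopy : ∀ i, Function.Injective (f i) ∧ ∀ u v, T.Adj u v → H.Adj (f i u) (f i v))
    (hdisj : ∀ i j, i ≠ j → Disjoint (Set.range (f i)) (Set.range (f j))) :
    (ν : ℝ) ≤ Real.exp 1 *
      ((n.descFactorial (Fintype.card γ)) * q ^ (Fintype.card γ - 1) / (Nat.card (T ≃g T))) := by
  classical
  have hγ : Nonempty γ := hT.isConnected.nonempty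
  set t := Fintype.card γ with ht
  rcases Nat.eq_zero_or_pos ν with hν0 | hνpos
  · subst hν0
    simp only [Nat.cast_zero]
    have hautT : (0 : ℝ) ≤ (Nat.card (T ≃g T) : ℝ) := Nat.cast_nonneg _
    positivity
  -- injections and ranges
  have hfinj : ∀ i, Function.Injective (f i) := fun i => (hcopy i).1
  have key : ∀ i j u v, f i u = f j v → i = j := by
    intro i j u v h
    by_contra hij
    exact Set.disjoint_left.mp (hdisj i j hij) ⟨u, rfl⟩ ⟨v, h.symm⟩
  -- the subgraph consisting of the ν disjoint copies of T
  set I : H.Subgraph :=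
    { verts := ⋃ i, Set.range (f i)
      Adj := fun a b => ∃ i u v, T.Adj u v ∧ a = f i u ∧ b = f i v
      adj_sub := by rintro a b ⟨i, u, v, huv, rfl, rfl⟩; exact (hcopy i).2 u v huv
      edge_vert := by
        rintro a b ⟨i, u, v, huv, rfl, rfl⟩
        exact Set.mem_iUnion.2 ⟨i, Set.mem_range_self u⟩
      symm := by constructor; rintro a b ⟨i, u, v, huv, rfl, rfl⟩; exact ⟨i, v, u, huv.symm, rfl, rfl⟩ }
    with hI
  have hAdjIff : ∀ i j u v, I.Adj (f i u) (f j v) ↔ i = j ∧ T.Adj u v := by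
    intro i j u v
    constructor
    · intro h
      rw [hI] at h
      obtain ⟨k, u', v', huv, h1, h2⟩ := h
      have hik : i = k := key i k u u' h1
      have hjk : j = k := key j k v v' h2
      rw [← hik] at h1
      rw [← hjk] at h2
      obtain rfl : u = u' := hfinj i h1
      have hv : v = v' := hfinj j h2
      refine ⟨hik.trans hjk.symm, ?_⟩
      rw [hv]
      exact huv
    · rintro ⟨rfl, huv⟩; exact ⟨i, u, v, huv, rfl, rfl⟩
  -- vertex equivalence
  have hmemV : ∀ (i : Fin ν) (x : γ), f i x ∈ I.verts := fun i x =>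
    Set.mem_iUnion.2 ⟨i, Set.mem_range_self x⟩
  have hVbij : Function.Bijective (fun p : Fin ν × γ => (⟨f p.1 p.2, hmemV p.1 p.2⟩ : I.verts)) := by
    constructor
    · rintro ⟨i, x⟩ ⟨j, y⟩ h
      have h' : f i x = f j y := congrArg Subtype.val h
      obtain rfl : i = j := key i j x y h'
      obtain rfl : x = y := hfinj i h'
      rfl
    · rintro ⟨a, ha⟩
      obtain ⟨i, x, rfl⟩ : ∃ i x, f i x = a := by
        simp only [hI, Set.mem_iUnion, Set.mem_range] at ha
        obtain ⟨i, x, hx⟩ := ha; exact ⟨i, x, hx⟩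
      exact ⟨(i, x), rfl⟩
  set eV : Fin ν × γ ≃ I.verts := Equiv.ofBijective _ hVbij with heV
  have heVval : ∀ p : Fin ν × γ, (eV p : Fin n) = f p.1 p.2 := fun p => rfl
  have hVcard : Nat.card I.verts = ν * t := by
    rw [← Nat.card_congr eV]
    simp [Nat.card_eq_fintype_card, ht]
  -- edge count
  have hEcard : Nat.card I.edgeSet = ν * (t - 1) := by
    have hEbij : Function.Bijective
        (fun p : Fin ν × T.edgeSet => (⟨Sym2.map (f p.1) p.2.1, by
          obtain ⟨i, e, he⟩ := p
          induction e with
          | _ u v =>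
            simp only [Sym2.map_pair_eq]
            exact Subgraph.mem_edgeSet.2 ⟨i, u, v, (SimpleGraph.mem_edgeSet T).1 he, rfl, rfl⟩⟩ :
          I.edgeSet)) := by
      constructor
      · rintro ⟨i, e, he⟩ ⟨j, e', he'⟩ h
        have h' : Sym2.map (f i) e = Sym2.map (f j) e' := congrArg Subtype.val h
        obtain rfl : i = j := by
          induction e with
          | _ u v =>
            induction e' with
            | _ u' v' =>
              simp only [Sym2.map_pair_eq, Sym2.eq, Sym2.rel_iff', Prod.mk.injEq,
                Prod.swap_prod_mk] at h'
              rcases h' with ⟨h1, _⟩ | ⟨h1, _⟩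
              · exact key i j u u' h1
              · exact key i j u v' h1
        obtain rfl : e = e' := Sym2.map.injective (hfinj i) h'
        rfl
      · rintro ⟨s, hs⟩
        induction s with
        | _ a b =>
          obtain ⟨i, u, v, huv, rfl, rfl⟩ := Subgraph.mem_edgeSet.1 hs
          exact ⟨⟨i, ⟨s(u, v), (SimpleGraph.mem_edgeSet T).2 huv⟩⟩, by simp [Sym2.map_pair_eq]⟩
    rw [← Nat.card_eq_of_bijective _ hEbij]
    have hTE : Nat.card T.edgeSet = t - 1 := by
      have h1 := hT.card_edgeFinset
      rw [Nat.card_eq_fintype_card, ← SimpleGraph.edgeFinset_card]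
      omega
    rw [Nat.card_prod, hTE, Nat.card_eq_fintype_card, Fintype.card_fin]
  -- automorphism lower bound
  have hautI : (Nat.factorial ν) * (Nat.card (T ≃g T)) ^ ν ≤ Nat.card (I.coe ≃g I.coe) := by
    haveI hIfin : Finite (I.coe ≃g I.coe) := by
      exact Finite.of_injective (fun φ => φ.toEquiv) fun a b h => by
        cases a; cases b; simpa using h
    set Φ : Equiv.Perm (Fin ν) × (Fin ν → (T ≃g T)) → (I.coe ≃g I.coe) := fun p =>
      { toFun := fun a => eV ((p.1 (eV.symm a).1), (p.2 (eV.symm a).1 (eV.symm a).2))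
        invFun := fun a => eV ((p.1.symm (eV.symm a).1),
          ((p.2 (p.1.symm (eV.symm a).1)).symm (eV.symm a).2))
        left_inv := by intro a; simp
        right_inv := by intro a; simp
        map_rel_iff' := by
          intro a b
          obtain ⟨⟨i, u⟩, rfl⟩ := eV.surjective a
          obtain ⟨⟨j, v⟩, rfl⟩ := eV.surjective b
          simp only [Equiv.coe_fn_mk, Equiv.symm_apply_apply]
          show I.coe.Adj _ _ ↔ I.coe.Adj _ _
          rw [Subgraph.coe_adj, Subgraph.coe_adj,
            heVval ⟨_, _⟩, heVval ⟨_, _⟩, heVval ⟨i, u⟩, heVval ⟨j, v⟩, hAdjIff, hAdjIff]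
          constructor
          · rintro ⟨h1, h2⟩
            obtain rfl : i = j := p.1.injective h1
            exact ⟨rfl, (p.2 i).map_rel_iff.1 h2⟩
          · rintro ⟨rfl, h2⟩
            exact ⟨rfl, (p.2 i).map_rel_iff.2 h2⟩ } with hΦ
    have hΦinj : Function.Injective Φ := by
      rintro ⟨σ, g⟩ ⟨σ', g'⟩ h
      have hfun : ∀ a, Φ (σ, g) a = Φ (σ', g') a := fun a => by rw [h]
      have hkey : ∀ i x, (σ i, g i x) = (σ' i, g' i x) := by
        intro i x
        have := hfun (eV (i, x))
        simp only [hΦ, Equiv.coe_fn_mk] at this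
        apply eV.injective
        simpa using this
      have hσ : σ = σ' :=
        Equiv.ext fun i => (Prod.ext_iff.mp (hkey i (Classical.arbitrary γ))).1
      have hg : g = g' :=
        funext fun i => RelIso.ext fun x => (Prod.ext_iff.mp (hkey i x)).2
      simp [hσ, hg]
    calc Nat.factorial ν * Nat.card (T ≃g T) ^ ν
        = Nat.card (Equiv.Perm (Fin ν) × (Fin ν → (T ≃g T))) := by
          haveI hfinT : Finite (T ≃g T) := by
            exact Finite.of_injective (fun φ => φ.toEquiv) fun a b h => by
              cases a; cases b; simpa using h
          rw [Nat.card_prod, Nat.card_fun]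
          simp [Nat.card_eq_fintype_card, Fintype.card_perm]
      _ ≤ Nat.card (I.coe ≃g I.coe) := Nat.card_le_card_of_injective Φ hΦinj
  -- numeric part
  have ht1 : 1 ≤ t := Fintype.card_pos
  set a : ℝ := (Nat.card (T ≃g T) : ℝ) with ha
  have hapos : (0 : ℝ) < a := by
    have : Nonempty (T ≃g T) := ⟨Iso.refl⟩
    haveI hfinT : Finite (T ≃g T) := by
      exact Finite.of_injective (fun φ => φ.toEquiv) fun a b h => by
        cases a; cases b; simpa using h
    rw [ha]
    exact_mod_cast Nat.card_pos
  set D : ℝ := ((n.descFactorial t : ℕ) : ℝ) with hD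
  have hDnn : (0 : ℝ) ≤ D := hD ▸ Nat.cast_nonneg _
  set E : ℝ := D * q ^ (t - 1) / a with hE
  have hEnonneg : 0 ≤ E := by
    rw [hE]
    exact div_nonneg (mul_nonneg hDnn (pow_nonneg hq0 _)) hapos.le
  have hAutIpos : (0 : ℝ) < (Nat.card (I.coe ≃g I.coe) : ℝ) := by
    have : Nonempty (I.coe ≃g I.coe) := ⟨Iso.refl⟩
    haveI hIfin : Finite (I.coe ≃g I.coe) := by
      exact Finite.of_injective (fun φ => φ.toEquiv) fun a b h => by
        cases a; cases b; simpa using h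
    exact_mod_cast Nat.card_pos
  have hsparse := hH I
  rw [hVcard, hEcard, le_div_iff₀ hAutIpos, one_mul] at hsparse
  -- ν! * a^ν ≤ E^ν * a^ν
  have hchain : (Nat.factorial ν : ℝ) * a ^ ν ≤ E ^ ν * a ^ ν := by
    calc (Nat.factorial ν : ℝ) * a ^ ν
        ≤ (Nat.card (I.coe ≃g I.coe) : ℝ) := by rw [ha]; exact_mod_cast hautI
      _ ≤ (n.descFactorial (ν * t) : ℝ) * q ^ (ν * (t - 1)) := hsparse
      _ ≤ D ^ ν * (q ^ (t - 1)) ^ ν := by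
          have hq' : (0 : ℝ) ≤ (q ^ (t - 1)) ^ ν := pow_nonneg (pow_nonneg hq0 _) _
          have hdf : ((n.descFactorial (ν * t) : ℕ) : ℝ) ≤ D ^ ν := by
            rw [hD]
            exact_mod_cast descFactorial_mul_le n t ν
          rw [Nat.mul_comm ν (t - 1), pow_mul]
          exact mul_le_mul_of_nonneg_right hdf hq'
      _ = (D * q ^ (t - 1)) ^ ν := by rw [mul_pow]
      _ = E ^ ν * a ^ ν := by
          rw [← mul_pow, hE]
          field_simp
  have hfacE : (Nat.factorial ν : ℝ) ≤ E ^ ν := by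
    have := mul_le_mul_of_nonneg_right hchain (le_of_lt (by positivity : (0:ℝ) < (a ^ ν)⁻¹))
    rwa [mul_assoc, mul_inv_cancel₀ (by positivity), mul_one, mul_assoc,
      mul_inv_cancel₀ (by positivity), mul_one] at this
  -- ν^ν ≤ (e·E)^ν
  have hfinal : ((ν : ℝ)) ^ ν ≤ (Real.exp 1 * E) ^ ν := by
    calc ((ν : ℝ)) ^ ν ≤ Real.exp ν * ν.factorial := pow_le_exp_mul_factorial ν
      _ ≤ Real.exp ν * E ^ ν := mul_le_mul_of_nonneg_left hfacE (Real.exp_nonneg _)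
      _ = (Real.exp 1 * E) ^ ν := by
          rw [mul_pow, ← Real.exp_nat_mul, mul_one]
  exact le_of_pow_le_pow_left₀ hνpos.ne' (mul_nonneg (Real.exp_nonneg 1) hEnonneg) hfinal
end
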